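/- arXiv:2107.08649 — 3 statements merged into one kernel-verified Lean document; each statement's English description precedes it below -/
import Mathlib

section
/- Under Assumptions 1–4, the gradient h satisfies the one-sided Lipschitz condition ⟨θ − θ', h(θ) − h(θ')⟩ ≥ −L_R|θ − θ'|² for all θ, θ' ∈ ℝ^d, where L_R := L_h(1+2R)^{2r} with L_h := L_G + L_F E[(1+2|X₀|)^{ρ−1}] + 1 and R := max{1, (3^{q−1}L_G/a)^{1/(2r−q+1)}, (2b/a)^{1/(2r−r̄)}}. -/
open MeasureTheory ProbabilityTheory Filter
open scoped ENNReal NNReal RealInnerProductSpace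

noncomputable section
set_option maxHeartbeats 2000000

theorem h_one_sided_Lipschitz
    {Ω : Type*} [MeasurableSpace Ω] (μ : Measure Ω) [IsProbabilityMeasure μ]
    (d m : ℕ) (hd : 0 < d) (hm : 0 < m)
    (q ρ : ℝ) (hq : 1 ≤ q) (hρ : 1 ≤ ρ)
    (r : ℕ) (hr : q ≤ 2 * (r : ℝ))
    (G F : EuclideanSpace ℝ (Fin d) → EuclideanSpace ℝ (Fin m) → EuclideanSpace ℝ (Fin d))
    (hGmeas : Measurable (Function.uncurry G))
    (hFmeas : Measurable (Function.uncurry F))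
    (u : EuclideanSpace ℝ (Fin d) → ℝ) (hu : ContDiff ℝ 1 u)
    (θ₀ : Ω → EuclideanSpace ℝ (Fin d)) (hθ₀meas : Measurable θ₀)
    (X : ℕ → Ω → EuclideanSpace ℝ (Fin m)) (hXmeas : ∀ n, Measurable (X n))
    (hXiid : ∀ n, μ.map (X n) = μ.map (X 0))
    -- Assumption 1
    (hθ₀mom : Integrable (fun ω => ‖θ₀ ω‖ ^ (4 * (2 * r + 1))) μ)
    (hX₀mom : Integrable (fun ω => ‖X 0 ω‖ ^ ((4 * (2 * (r : ℝ) + 1)) * ρ)) μ)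
    (hgrad : ∀ θ, gradient u θ = ∫ ω, (G θ (X 0 ω) + F θ (X 0 ω)) ∂μ)
    -- Assumption 2
    (LG KG : ℝ) (hLG : 0 < LG) (hKG : 1 < KG)
    (hG1 : ∀ θ θ' : EuclideanSpace ℝ (Fin d),
      ∫ ω, ‖G θ (X 0 ω) - G θ' (X 0 ω)‖ ∂μ ≤ LG * (1 + ‖θ‖ + ‖θ'‖) ^ (q - 1) * ‖θ - θ'‖)
    (hG2 : ∀ θ x, ‖G θ x‖ ≤ KG * (1 + ‖x‖) ^ ρ * (1 + ‖θ‖) ^ q)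
    -- Assumption 3
    (LF KF : ℝ) (hLF : 0 < LF) (hKF : 0 < KF)
    (hF1 : ∀ θ θ' x x', ‖F θ x - F θ' x'‖ ≤
      LF * (1 + ‖x‖ + ‖x'‖) ^ (ρ - 1) * (1 + ‖θ‖ + ‖θ'‖) ^ (2 * r) * (‖θ - θ'‖ + ‖x - x'‖))
    (hF2 : ∀ θ x, ‖F θ x‖ ≤ KF * (1 + ‖x‖) ^ ρ * (1 + ‖θ‖ ^ (2 * r + 1)))
    -- Assumption 4
    (Aop Bop : EuclideanSpace ℝ (Fin m) → EuclideanSpace ℝ (Fin d) →L[ℝ] EuclideanSpace ℝ (Fin d))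
    (hAmeas : ∀ y, Measurable fun x => Aop x y) (hBmeas : ∀ y, Measurable fun x => Bop x y)
    (hApos : ∀ x y, (0 : ℝ) ≤ ⟪y, Aop x y⟫) (hBpos : ∀ x y, (0 : ℝ) ≤ ⟪y, Bop x y⟫)
    (rbar : ℝ) (hrbar0 : 0 ≤ rbar) (hrbar1 : rbar < 2 * (r : ℝ))
    (hconv : ∀ θ θ' x,
      ⟪θ - θ', Aop x (θ - θ')⟫ * (‖θ‖ ^ (2 * r) + ‖θ'‖ ^ (2 * r))
        - ⟪θ - θ', Bop x (θ - θ')⟫ * (‖θ‖ ^ rbar + ‖θ'‖ ^ rbar)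
      ≤ ⟪θ - θ', F θ x - F θ' x⟫)
    (a b : ℝ) (ha : 0 < a) (hb : 0 ≤ b)
    (hAint : ∀ y, Integrable (fun ω => ⟪y, Aop (X 0 ω) y⟫) μ)
    (hBint : ∀ y, Integrable (fun ω => ⟪y, Bop (X 0 ω) y⟫) μ)
    (haA : ∀ y : EuclideanSpace ℝ (Fin d), a * ‖y‖ ^ 2 ≤ ∫ ω, ⟪y, Aop (X 0 ω) y⟫ ∂μ)
    (hbB : ∀ y : EuclideanSpace ℝ (Fin d), ∫ ω, ⟪y, Bop (X 0 ω) y⟫ ∂μ ≤ b * ‖y‖ ^ 2)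
    :
    let Lh := LG + LF * (∫ ω, (1 + 2 * ‖X 0 ω‖) ^ (ρ - 1) ∂μ) + 1
    let R := max 1 (max (((3 : ℝ) ^ (q - 1) * LG / a) ^ ((1 : ℝ) / (2 * (r : ℝ) - q + 1)))
      ((2 * b / a) ^ ((1 : ℝ) / (2 * (r : ℝ) - rbar))))
    let LR := Lh * (1 + 2 * R) ^ (2 * r)
    ∀ θ θ' : EuclideanSpace ℝ (Fin d),
      -(LR * ‖θ - θ'‖ ^ 2) ≤ ⟪θ - θ', gradient u θ - gradient u θ'⟫ := by
  intro Lh R LR θ θ'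
  -- notation
  set K : ℝ := ∫ ω, (1 + 2 * ‖X 0 ω‖) ^ (ρ - 1) ∂μ with hK_def
  have hLh : Lh = LG + LF * K + 1 := rfl
  have hLR : LR = Lh * (1 + 2 * R) ^ (2 * r) := rfl
  have hrn : (0:ℝ) ≤ (r:ℝ) := Nat.cast_nonneg r
  have hR1' : (1:ℝ) ≤ R := le_max_left _ _
  have hRpos : (0:ℝ) < R := lt_of_lt_of_le one_pos hR1'
  have hq0 : (0:ℝ) ≤ q - 1 := by linarith
  have hp1 : (0:ℝ) < 2 * (r:ℝ) - q + 1 := by linarith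
  have hp2 : (0:ℝ) < 2 * (r:ℝ) - rbar := by linarith
  have hcast2r : ((2*r : ℕ) : ℝ) = 2 * (r:ℝ) := by push_cast; ring
  -- the two R-inequalities
  have hR_1 : 3 ^ (q-1) * LG ≤ a * R ^ (2 * (r:ℝ) - q + 1) := by
    have hz : (0:ℝ) ≤ 3 ^ (q-1) * LG / a := by positivity
    have hw : (3 ^ (q-1) * LG / a) ^ ((1:ℝ)/(2*(r:ℝ)-q+1)) ≤ R :=
      le_trans (le_max_left _ _) (le_max_right _ _)
    have h1 : ((3 ^ (q-1) * LG / a) ^ ((1:ℝ)/(2*(r:ℝ)-q+1))) ^ (2*(r:ℝ)-q+1)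
        ≤ R ^ (2*(r:ℝ)-q+1) :=
      Real.rpow_le_rpow (Real.rpow_nonneg hz _) hw (le_of_lt hp1)
    rw [← Real.rpow_mul hz, one_div, inv_mul_cancel₀ hp1.ne', Real.rpow_one] at h1
    rw [div_le_iff₀ ha] at h1
    nlinarith [h1, Real.rpow_nonneg (le_of_lt hRpos) (2*(r:ℝ)-q+1)]
  have hR_2 : 2 * b ≤ a * R ^ (2 * (r:ℝ) - rbar) := by
    have hz : (0:ℝ) ≤ 2 * b / a := by positivity
    have hw : (2 * b / a) ^ ((1:ℝ)/(2*(r:ℝ)-rbar)) ≤ R :=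
      le_trans (le_max_right _ _) (le_max_right _ _)
    have h1 : ((2 * b / a) ^ ((1:ℝ)/(2*(r:ℝ)-rbar))) ^ (2*(r:ℝ)-rbar)
        ≤ R ^ (2*(r:ℝ)-rbar) :=
      Real.rpow_le_rpow (Real.rpow_nonneg hz _) hw (le_of_lt hp2)
    rw [← Real.rpow_mul hz, one_div, inv_mul_cancel₀ hp2.ne', Real.rpow_one] at h1
    rw [div_le_iff₀ ha] at h1
    nlinarith [h1]
  -- integrability infrastructure
  set E : ℝ := 4 * (2 * (r:ℝ) + 1) * ρ with hE_def
  have hE1 : ρ ≤ E := by nlinarith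
  have hErho1 : ρ - 1 ≤ E := by linarith
  have hEnn : (0:ℝ) ≤ E := by nlinarith
  have hmX : Measurable (X 0) := hXmeas 0
  have hXE : Integrable (fun ω => ‖X 0 ω‖ ^ E) μ := by
    have := hX₀mom
    simpa [hE_def, mul_comm, mul_assoc, mul_left_comm] using this
  have hDint : Integrable (fun ω => 3 ^ E * (1 + ‖X 0 ω‖ ^ E)) μ :=
    (((integrable_const (1:ℝ)).add hXE).const_mul _)
  have hdom : ∀ c : ℝ, 0 ≤ c → c ≤ E → ∀ z : ℝ, 0 ≤ z →
      (1 + 2*z) ^ c ≤ 3 ^ E * (1 + z ^ E) := by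
    intro c hc hcE z hz
    have h3 : (1:ℝ) ≤ 3 := by norm_num
    have h7 : (0:ℝ) ≤ (3:ℝ) ^ E := Real.rpow_nonneg (by norm_num) _
    rcases le_total z 1 with h1 | h1
    · have h8 : (1 + 2*z) ^ c ≤ 3 ^ c :=
        Real.rpow_le_rpow (by linarith) (by linarith) hc
      have h2 : (3:ℝ) ^ c ≤ 3 ^ E := Real.rpow_le_rpow_of_exponent_le h3 hcE
      have h4 : (0:ℝ) ≤ z ^ E := Real.rpow_nonneg hz _
      calc (1 + 2*z) ^ c ≤ 3 ^ E := le_trans h8 h2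
        _ = 3 ^ E * 1 := (mul_one _).symm
        _ ≤ 3 ^ E * (1 + z ^ E) := by
            exact mul_le_mul_of_nonneg_left (by linarith) h7
    · have hle : (1 + 2*z) ^ c ≤ (3*z) ^ c :=
        Real.rpow_le_rpow (by linarith) (by linarith) hc
      have heq : (3*z) ^ c = 3 ^ c * z ^ c :=
        Real.mul_rpow (by norm_num) hz
      have h2 : (3:ℝ) ^ c ≤ 3 ^ E := Real.rpow_le_rpow_of_exponent_le h3 hcE
      have h5 : z ^ c ≤ z ^ E := Real.rpow_le_rpow_of_exponent_le h1 hcE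
      have h6 : (0:ℝ) ≤ z ^ c := Real.rpow_nonneg hz _
      have h9 : (0:ℝ) ≤ z ^ E := Real.rpow_nonneg hz _
      have h10 : (0:ℝ) ≤ (3:ℝ) ^ c := Real.rpow_nonneg (by norm_num) _
      calc (1 + 2*z) ^ c ≤ 3 ^ c * z ^ c := by rw [← heq]; exact hle
        _ ≤ 3 ^ E * z ^ E := mul_le_mul h2 h5 h6 h7
        _ ≤ 3 ^ E * (1 + z ^ E) := mul_le_mul_of_nonneg_left (by linarith) h7
  have hIrho1 : Integrable (fun ω => (1 + 2*‖X 0 ω‖) ^ (ρ-1)) μ := by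
    refine Integrable.mono' hDint ?_ (Filter.Eventually.of_forall fun ω => ?_)
    · exact ((Real.continuous_rpow_const (by linarith)).measurable.comp
        (measurable_const.add (hmX.norm.const_mul 2))).aestronglyMeasurable
    · rw [Real.norm_eq_abs, abs_of_nonneg (Real.rpow_nonneg (by positivity) _)]
      exact hdom (ρ-1) (by linarith) hErho1 _ (norm_nonneg _)
  have hIrho : Integrable (fun ω => (1 + ‖X 0 ω‖) ^ ρ) μ := by
    refine Integrable.mono' hDint ?_ (Filter.Eventually.of_forall fun ω => ?_)
    · exact ((Real.continuous_rpow_const (by linarith)).measurable.comp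
        (measurable_const.add hmX.norm)).aestronglyMeasurable
    · rw [Real.norm_eq_abs, abs_of_nonneg (Real.rpow_nonneg (by positivity) _)]
      calc (1 + ‖X 0 ω‖) ^ ρ ≤ (1 + 2*‖X 0 ω‖) ^ ρ := by
            apply Real.rpow_le_rpow (by positivity) (by nlinarith [norm_nonneg (X 0 ω)]) (by linarith)
        _ ≤ 3 ^ E * (1 + ‖X 0 ω‖ ^ E) := hdom ρ (by linarith) hE1 _ (norm_nonneg _)
  have hKnn : 0 ≤ K := integral_nonneg fun ω => Real.rpow_nonneg (by positivity) _
  have hIG : ∀ ϑ : EuclideanSpace ℝ (Fin d), Integrable (fun ω => G ϑ (X 0 ω)) μ := by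
    intro ϑ
    refine Integrable.mono' (hIrho.const_mul (KG * (1 + ‖ϑ‖) ^ q)) ?_
      (Filter.Eventually.of_forall fun ω => ?_)
    · exact (hGmeas.comp (measurable_const.prodMk hmX)).aestronglyMeasurable
    · calc ‖G ϑ (X 0 ω)‖ ≤ KG * (1 + ‖X 0 ω‖) ^ ρ * (1 + ‖ϑ‖) ^ q := hG2 ϑ (X 0 ω)
        _ = KG * (1 + ‖ϑ‖) ^ q * (1 + ‖X 0 ω‖) ^ ρ := by ring
  have hIF : ∀ ϑ : EuclideanSpace ℝ (Fin d), Integrable (fun ω => F ϑ (X 0 ω)) μ := by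
    intro ϑ
    refine Integrable.mono' (hIrho.const_mul (KF * (1 + ‖ϑ‖ ^ (2*r+1)))) ?_
      (Filter.Eventually.of_forall fun ω => ?_)
    · exact (hFmeas.comp (measurable_const.prodMk hmX)).aestronglyMeasurable
    · calc ‖F ϑ (X 0 ω)‖ ≤ KF * (1 + ‖X 0 ω‖) ^ ρ * (1 + ‖ϑ‖ ^ (2*r+1)) := hF2 ϑ (X 0 ω)
        _ = KF * (1 + ‖ϑ‖ ^ (2*r+1)) * (1 + ‖X 0 ω‖) ^ ρ := by ring
  -- key lemma C : 2 b R^rbar ≤ LF * K * (1+2R)^(2r)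
  have hbR : 2 * (b * R ^ rbar) ≤ LF * K * (1 + 2*R) ^ (2*r) := by
    have hRrb : (0:ℝ) ≤ R ^ rbar := Real.rpow_nonneg hRpos.le _
    have h2b : 2 * (b * R ^ rbar) ≤ a * R ^ (2*r) := by
      have h6 := mul_le_mul_of_nonneg_right hR_2 hRrb
      have h7 : a * R ^ (2*(r:ℝ)-rbar) * R ^ rbar = a * R ^ (2*r) := by
        rw [mul_assoc, ← Real.rpow_add hRpos,
          show 2*(r:ℝ)-rbar+rbar = ((2*r : ℕ):ℝ) by rw [hcast2r]; ring,
          Real.rpow_natCast]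
      rw [h7] at h6
      linarith
    set θR : EuclideanSpace ℝ (Fin d) := EuclideanSpace.single ⟨0, hd⟩ R with hθR_def
    have hnormθR : ‖θR‖ = R := by
      rw [hθR_def, EuclideanSpace.norm_single, Real.norm_eq_abs, abs_of_pos hRpos]
    set yv : EuclideanSpace ℝ (Fin d) := θR - -θR with hyv_def
    have hnyv : ‖yv‖ = 2*R := by
      rw [hyv_def, sub_neg_eq_add, ← two_smul ℝ θR, norm_smul, hnormθR]
      simp
    have hpt : ∀ ω, ⟪yv, Aop (X 0 ω) yv⟫ * (R ^ (2*r) + R ^ (2*r))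
        - ⟪yv, Bop (X 0 ω) yv⟫ * (R ^ rbar + R ^ rbar)
        ≤ 4*R^2*LF*(1 + 2*R) ^ (2*r) * (1 + 2*‖X 0 ω‖) ^ (ρ-1) := by
      intro ω
      have h1 := hconv θR (-θR) (X 0 ω)
      rw [← hyv_def, norm_neg, hnormθR] at h1
      have h2 : ⟪yv, F θR (X 0 ω) - F (-θR) (X 0 ω)⟫ ≤
          ‖yv‖ * ‖F θR (X 0 ω) - F (-θR) (X 0 ω)‖ := real_inner_le_norm _ _
      have h3 := hF1 θR (-θR) (X 0 ω) (X 0 ω)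
      rw [sub_self, norm_zero, add_zero, norm_neg, hnormθR, ← hyv_def, hnyv,
        show (1:ℝ) + ‖X 0 ω‖ + ‖X 0 ω‖ = 1 + 2*‖X 0 ω‖ by ring,
        show (1:ℝ) + R + R = 1 + 2*R by ring] at h3
      have h4 : ⟪yv, F θR (X 0 ω) - F (-θR) (X 0 ω)⟫ ≤
          2*R * (LF * (1 + 2*‖X 0 ω‖) ^ (ρ-1) * (1 + 2*R) ^ (2*r) * (2*R)) := by
        calc ⟪yv, F θR (X 0 ω) - F (-θR) (X 0 ω)⟫
            ≤ ‖yv‖ * ‖F θR (X 0 ω) - F (-θR) (X 0 ω)‖ := h2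
          _ = 2*R * ‖F θR (X 0 ω) - F (-θR) (X 0 ω)‖ := by rw [hnyv]
          _ ≤ 2*R * (LF * (1 + 2*‖X 0 ω‖) ^ (ρ-1) * (1 + 2*R) ^ (2*r) * (2*R)) :=
              mul_le_mul_of_nonneg_left h3 (by linarith)
      have h5 : 2*R * (LF * (1 + 2*‖X 0 ω‖) ^ (ρ-1) * (1 + 2*R) ^ (2*r) * (2*R)) =
          4*R^2*LF*(1 + 2*R) ^ (2*r) * (1 + 2*‖X 0 ω‖) ^ (ρ-1) := by ring
      linarith [h1, h4]
    have hintA : Integrable (fun ω => ⟪yv, Aop (X 0 ω) yv⟫ * (R ^ (2*r) + R ^ (2*r))) μ :=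
      (hAint yv).mul_const _
    have hintB : Integrable (fun ω => ⟪yv, Bop (X 0 ω) yv⟫ * (R ^ rbar + R ^ rbar)) μ :=
      (hBint yv).mul_const _
    have hint : ∫ ω, (⟪yv, Aop (X 0 ω) yv⟫ * (R ^ (2*r) + R ^ (2*r))
        - ⟪yv, Bop (X 0 ω) yv⟫ * (R ^ rbar + R ^ rbar)) ∂μ ≤
        ∫ ω, 4*R^2*LF*(1 + 2*R) ^ (2*r) * (1 + 2*‖X 0 ω‖) ^ (ρ-1) ∂μ :=
      integral_mono (hintA.sub hintB)
        (hIrho1.const_mul (4*R^2*LF*(1 + 2*R) ^ (2*r))) hpt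
    rw [integral_sub hintA hintB, integral_mul_const, integral_mul_const,
      integral_const_mul] at hint
    have hAy := haA yv
    have hBy := hbB yv
    rw [hnyv] at hAy hBy
    have hc2 : (0:ℝ) ≤ R ^ (2*r) + R ^ (2*r) := by positivity
    have hcb : (0:ℝ) ≤ R ^ rbar + R ^ rbar := by linarith
    have hA' := mul_le_mul_of_nonneg_right hAy hc2
    have hB' := mul_le_mul_of_nonneg_right hBy hcb
    -- combine : 8 a R^2 R^{2r} - 8 b R^2 R^rbar ≤ 4 R^2 LF (1+2R)^{2r} K
    have hfin : 8*(a * R^(2*r))*R^2 - 8*(b * R^rbar)*R^2 ≤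
        4*R^2*(LF * K *(1 + 2*R)^(2*r)) := by nlinarith [hint, hA', hB']
    have hR2pos : (0:ℝ) < R^2 := by positivity
    nlinarith [hfin, h2b, hR2pos]
  -- split of the inner product
  set Δ : EuclideanSpace ℝ (Fin d) := θ - θ' with hΔ_def
  have hGsub : Integrable (fun ω => G θ (X 0 ω) - G θ' (X 0 ω)) μ := (hIG θ).sub (hIG θ')
  have hFsub : Integrable (fun ω => F θ (X 0 ω) - F θ' (X 0 ω)) μ := (hIF θ).sub (hIF θ')
  have hInnG : Integrable (fun ω => (⟪Δ, G θ (X 0 ω) - G θ' (X 0 ω)⟫ : ℝ)) μ := by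
    simpa using (innerSL ℝ Δ).integrable_comp hGsub
  have hInnF : Integrable (fun ω => (⟪Δ, F θ (X 0 ω) - F θ' (X 0 ω)⟫ : ℝ)) μ := by
    simpa using (innerSL ℝ Δ).integrable_comp hFsub
  have key : ⟪Δ, gradient u θ - gradient u θ'⟫ =
      (∫ ω, ⟪Δ, G θ (X 0 ω) - G θ' (X 0 ω)⟫ ∂μ) +
        ∫ ω, ⟪Δ, F θ (X 0 ω) - F θ' (X 0 ω)⟫ ∂μ := by
    have e1 : gradient u θ - gradient u θ' =
        ((∫ ω, G θ (X 0 ω) ∂μ) - ∫ ω, G θ' (X 0 ω) ∂μ) +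
          ((∫ ω, F θ (X 0 ω) ∂μ) - ∫ ω, F θ' (X 0 ω) ∂μ) := by
      rw [hgrad θ, hgrad θ', integral_add (hIG θ) (hIF θ), integral_add (hIG θ') (hIF θ')]
      abel
    rw [integral_inner hGsub, integral_inner hFsub,
      e1, inner_add_right, integral_sub (hIG θ) (hIG θ'), integral_sub (hIF θ) (hIF θ')]
  -- G bound
  have hGbd : -(LG * (1 + ‖θ‖ + ‖θ'‖) ^ (q-1) * (‖Δ‖ * ‖Δ‖)) ≤
      ∫ ω, ⟪Δ, G θ (X 0 ω) - G θ' (X 0 ω)⟫ ∂μ := by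
    have h2 : ∫ ω, -(‖Δ‖ * ‖G θ (X 0 ω) - G θ' (X 0 ω)‖) ∂μ ≤
        ∫ ω, ⟪Δ, G θ (X 0 ω) - G θ' (X 0 ω)⟫ ∂μ := by
      refine integral_mono ((hGsub.norm.const_mul ‖Δ‖).neg) hInnG fun ω => ?_
      exact (abs_le.mp (abs_real_inner_le_norm _ _)).1
    have h3 : ∫ ω, -(‖Δ‖ * ‖G θ (X 0 ω) - G θ' (X 0 ω)‖) ∂μ =
        -(‖Δ‖ * ∫ ω, ‖G θ (X 0 ω) - G θ' (X 0 ω)‖ ∂μ) := by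
      rw [integral_neg, integral_const_mul]
    rw [h3] at h2
    refine le_trans ?_ h2
    have h4 := hG1 θ θ'
    have h5 : ‖Δ‖ * (∫ ω, ‖G θ (X 0 ω) - G θ' (X 0 ω)‖ ∂μ) ≤
        ‖Δ‖ * (LG * (1 + ‖θ‖ + ‖θ'‖) ^ (q-1) * ‖θ - θ'‖) :=
      mul_le_mul_of_nonneg_left h4 (norm_nonneg _)
    have : ‖θ - θ'‖ = ‖Δ‖ := rfl
    nlinarith [h5]
  -- F Lipschitz bound
  have hFlip : -(LF * K * (1 + ‖θ‖ + ‖θ'‖) ^ (2*r) * (‖Δ‖ * ‖Δ‖)) ≤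
      ∫ ω, ⟪Δ, F θ (X 0 ω) - F θ' (X 0 ω)⟫ ∂μ := by
    have hptF : ∀ ω, ‖F θ (X 0 ω) - F θ' (X 0 ω)‖ ≤
        LF * ((1 + ‖θ‖ + ‖θ'‖) ^ (2*r) * ‖Δ‖) * (1 + 2*‖X 0 ω‖) ^ (ρ-1) := by
      intro ω
      have h := hF1 θ θ' (X 0 ω) (X 0 ω)
      rw [sub_self, norm_zero, add_zero,
        show (1:ℝ) + ‖X 0 ω‖ + ‖X 0 ω‖ = 1 + 2*‖X 0 ω‖ by ring] at h
      calc ‖F θ (X 0 ω) - F θ' (X 0 ω)‖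
          ≤ LF * (1 + 2*‖X 0 ω‖) ^ (ρ-1) * (1 + ‖θ‖ + ‖θ'‖) ^ (2*r) * ‖θ - θ'‖ := h
        _ = LF * ((1 + ‖θ‖ + ‖θ'‖) ^ (2*r) * ‖Δ‖) * (1 + 2*‖X 0 ω‖) ^ (ρ-1) := by
            rw [hΔ_def]; ring
    have h2 : ∫ ω, -(‖Δ‖ * ‖F θ (X 0 ω) - F θ' (X 0 ω)‖) ∂μ ≤
        ∫ ω, ⟪Δ, F θ (X 0 ω) - F θ' (X 0 ω)⟫ ∂μ := by
      refine integral_mono ((hFsub.norm.const_mul ‖Δ‖).neg) hInnF fun ω => ?_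
      exact (abs_le.mp (abs_real_inner_le_norm _ _)).1
    have h3 : ∫ ω, -(‖Δ‖ * ‖F θ (X 0 ω) - F θ' (X 0 ω)‖) ∂μ =
        -(‖Δ‖ * ∫ ω, ‖F θ (X 0 ω) - F θ' (X 0 ω)‖ ∂μ) := by
      rw [integral_neg, integral_const_mul]
    rw [h3] at h2
    refine le_trans ?_ h2
    have h4 : ∫ ω, ‖F θ (X 0 ω) - F θ' (X 0 ω)‖ ∂μ ≤
        LF * ((1 + ‖θ‖ + ‖θ'‖) ^ (2*r) * ‖Δ‖) * K := by
      have := integral_mono hFsub.norm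
        (hIrho1.const_mul (LF * ((1 + ‖θ‖ + ‖θ'‖) ^ (2*r) * ‖Δ‖))) hptF
      rwa [integral_const_mul] at this
    have h5 : ‖Δ‖ * (∫ ω, ‖F θ (X 0 ω) - F θ' (X 0 ω)‖ ∂μ) ≤
        ‖Δ‖ * (LF * ((1 + ‖θ‖ + ‖θ'‖) ^ (2*r) * ‖Δ‖) * K) :=
      mul_le_mul_of_nonneg_left h4 (norm_nonneg _)
    nlinarith [h5]
  -- F drift bound
  have hFdrift : a * ‖Δ‖ ^ 2 * (‖θ‖ ^ (2*r) + ‖θ'‖ ^ (2*r))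
      - b * ‖Δ‖ ^ 2 * (‖θ‖ ^ rbar + ‖θ'‖ ^ rbar) ≤
      ∫ ω, ⟪Δ, F θ (X 0 ω) - F θ' (X 0 ω)⟫ ∂μ := by
    have hintA : Integrable (fun ω => ⟪Δ, Aop (X 0 ω) Δ⟫ * (‖θ‖ ^ (2*r) + ‖θ'‖ ^ (2*r))) μ :=
      (hAint Δ).mul_const _
    have hintB : Integrable (fun ω => ⟪Δ, Bop (X 0 ω) Δ⟫ * (‖θ‖ ^ rbar + ‖θ'‖ ^ rbar)) μ :=
      (hBint Δ).mul_const _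
    have h1 : ∫ ω, (⟪Δ, Aop (X 0 ω) Δ⟫ * (‖θ‖ ^ (2*r) + ‖θ'‖ ^ (2*r))
        - ⟪Δ, Bop (X 0 ω) Δ⟫ * (‖θ‖ ^ rbar + ‖θ'‖ ^ rbar)) ∂μ ≤
        ∫ ω, ⟪Δ, F θ (X 0 ω) - F θ' (X 0 ω)⟫ ∂μ := by
      refine integral_mono (hintA.sub hintB) hInnF fun ω => ?_
      exact hconv θ θ' (X 0 ω)
    have h2 : ∫ ω, (⟪Δ, Aop (X 0 ω) Δ⟫ * (‖θ‖ ^ (2*r) + ‖θ'‖ ^ (2*r))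
        - ⟪Δ, Bop (X 0 ω) Δ⟫ * (‖θ‖ ^ rbar + ‖θ'‖ ^ rbar)) ∂μ =
        (∫ ω, ⟪Δ, Aop (X 0 ω) Δ⟫ ∂μ) * (‖θ‖ ^ (2*r) + ‖θ'‖ ^ (2*r))
        - (∫ ω, ⟪Δ, Bop (X 0 ω) Δ⟫ ∂μ) * (‖θ‖ ^ rbar + ‖θ'‖ ^ rbar) := by
      rw [integral_sub hintA hintB, integral_mul_const, integral_mul_const]
    rw [h2] at h1
    refine le_trans ?_ h1
    have hC2 : (0:ℝ) ≤ ‖θ‖ ^ (2*r) + ‖θ'‖ ^ (2*r) := by positivity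
    have hCb : (0:ℝ) ≤ ‖θ‖ ^ rbar + ‖θ'‖ ^ rbar :=
      add_nonneg (Real.rpow_nonneg (norm_nonneg _) _) (Real.rpow_nonneg (norm_nonneg _) _)
    have hA' := mul_le_mul_of_nonneg_right (haA Δ) hC2
    have hB' := mul_le_mul_of_nonneg_right (hbB Δ) hCb
    linarith
  -- scalar helpers
  have hvar : ∀ x : ℝ, 0 ≤ x → b * x ^ rbar ≤ a/2 * x ^ (2*r) + b * R ^ rbar := by
    intro x hx
    rcases le_total x R with h | h
    · have h1 : x ^ rbar ≤ R ^ rbar := Real.rpow_le_rpow hx h hrbar0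
      have h2 : (0:ℝ) ≤ x ^ (2*r) := pow_nonneg hx _
      nlinarith
    · have hx1 : (1:ℝ) ≤ x := le_trans hR1' h
      have hxpos : (0:ℝ) < x := by linarith
      have h1 : a * R ^ (2*(r:ℝ)-rbar) ≤ a * x ^ (2*(r:ℝ)-rbar) :=
        mul_le_mul_of_nonneg_left
          (Real.rpow_le_rpow (le_of_lt hRpos) h (le_of_lt hp2)) ha.le
      have hxr : (0:ℝ) ≤ x ^ rbar := Real.rpow_nonneg hx _
      have h2 : 2*b * x ^ rbar ≤ a * x ^ (2*(r:ℝ)-rbar) * x ^ rbar :=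
        mul_le_mul_of_nonneg_right (le_trans hR_2 h1) hxr
      have h3 : x ^ (2*(r:ℝ)-rbar) * x ^ rbar = x ^ (2*r) := by
        rw [← Real.rpow_add hxpos,
          show 2*(r:ℝ)-rbar+rbar = ((2*r : ℕ):ℝ) by rw [hcast2r]; ring,
          Real.rpow_natCast]
      have h3' : a * x ^ (2*(r:ℝ)-rbar) * x ^ rbar = a * x ^ (2*r) := by
        rw [mul_assoc, h3]
      rw [h3'] at h2
      have h4 : (0:ℝ) ≤ b * R ^ rbar := mul_nonneg hb (Real.rpow_nonneg hRpos.le _)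
      nlinarith
  have hGsig : ∀ s t : ℝ, 0 ≤ s → 0 ≤ t → 2*R ≤ s + t →
      LG * (1 + s + t) ^ (q-1) ≤ a/2 * (s ^ (2*r) + t ^ (2*r)) := by
    intro s t hs ht hst
    set σ : ℝ := (s + t)/2 with hσ_def
    have hσR : R ≤ σ := by rw [hσ_def]; linarith
    have hσ1 : (1:ℝ) ≤ σ := le_trans hR1' hσR
    have hσ0 : (0:ℝ) < σ := by linarith
    have sA : (1 + s + t) ^ (q-1) ≤ (3*σ) ^ (q-1) :=
      Real.rpow_le_rpow (by positivity) (by rw [hσ_def]; linarith) hq0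
    have sB : (3*σ) ^ (q-1) = 3 ^ (q-1) * σ ^ (q-1) :=
      Real.mul_rpow (by norm_num) hσ0.le
    have hσq : (0:ℝ) ≤ σ ^ (q-1) := Real.rpow_nonneg hσ0.le _
    have sC : LG * (3 ^ (q-1) * σ ^ (q-1)) ≤ a * R ^ (2*(r:ℝ)-q+1) * σ ^ (q-1) := by
      have h6 := mul_le_mul_of_nonneg_right hR_1 hσq
      linarith [h6]
    have sD : a * R ^ (2*(r:ℝ)-q+1) * σ ^ (q-1) ≤ a * σ ^ (2*(r:ℝ)-q+1) * σ ^ (q-1) := by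
      have h5 : R ^ (2*(r:ℝ)-q+1) ≤ σ ^ (2*(r:ℝ)-q+1) :=
        Real.rpow_le_rpow hRpos.le hσR hp1.le
      have := mul_le_mul_of_nonneg_right (mul_le_mul_of_nonneg_left h5 ha.le) hσq
      linarith [this]
    have sE : a * σ ^ (2*(r:ℝ)-q+1) * σ ^ (q-1) = a * σ ^ (2*r) := by
      rw [mul_assoc, ← Real.rpow_add hσ0,
        show 2*(r:ℝ)-q+1+(q-1) = ((2*r : ℕ):ℝ) by rw [hcast2r]; ring,
        Real.rpow_natCast]
    have sF : σ ^ (2*r) ≤ (s ^ (2*r) + t ^ (2*r))/2 := by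
      have hc := (convexOn_pow (2*r)).2 (Set.mem_Ici.mpr hs) (Set.mem_Ici.mpr ht)
        (by norm_num : (0:ℝ) ≤ 1/2) (by norm_num : (0:ℝ) ≤ 1/2) (by norm_num)
      simp only [smul_eq_mul] at hc
      have e : (1/2:ℝ)*s + 1/2*t = σ := by rw [hσ_def]; ring
      rw [e] at hc
      linarith
    calc LG * (1 + s + t) ^ (q-1) ≤ LG * (3 ^ (q-1) * σ ^ (q-1)) := by
          rw [← sB]; exact mul_le_mul_of_nonneg_left sA hLG.le
      _ ≤ a * σ ^ (2*(r:ℝ)-q+1) * σ ^ (q-1) := le_trans sC sD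
      _ = a * σ ^ (2*r) := sE
      _ ≤ a/2 * (s ^ (2*r) + t ^ (2*r)) := by
          have := mul_le_mul_of_nonneg_left sF ha.le
          linarith
  -- final assembly
  rw [key]
  have hnn : (0:ℝ) ≤ (1 + 2*R) ^ (2*r) := by positivity
  have hΔnn : (0:ℝ) ≤ ‖Δ‖ * ‖Δ‖ := mul_nonneg (norm_nonneg _) (norm_nonneg _)
  have hsq : ‖θ - θ'‖ ^ 2 = ‖Δ‖ * ‖Δ‖ := by rw [hΔ_def]; ring
  rcases le_total (‖θ‖ + ‖θ'‖) (2*R) with hcase | hcase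
  · -- small case
    have hb1 : (1 + ‖θ‖ + ‖θ'‖) ^ (q-1) ≤ (1 + 2*R) ^ (2*r) := by
      have s1 : (1 + ‖θ‖ + ‖θ'‖) ^ (q-1) ≤ (1 + 2*R) ^ (q-1) :=
        Real.rpow_le_rpow (by positivity) (by linarith) hq0
      have s2 : (1 + 2*R) ^ (q-1) ≤ (1 + 2*R) ^ (((2*r : ℕ)):ℝ) := by
        apply Real.rpow_le_rpow_of_exponent_le (by linarith)
        rw [hcast2r]; linarith
      rw [Real.rpow_natCast] at s2
      linarith
    have hb2 : (1 + ‖θ‖ + ‖θ'‖) ^ (2*r) ≤ (1 + 2*R) ^ (2*r) := by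
      apply pow_le_pow_left₀ (by positivity) (by linarith)
    have hLGn := hLG.le
    have hLFK : 0 ≤ LF * K := mul_nonneg hLF.le hKnn
    rw [hLR, hLh, hsq]
    have m1 : LG * ((1 + ‖θ‖ + ‖θ'‖) ^ (q-1) * (‖Δ‖ * ‖Δ‖)) ≤
        LG * ((1 + 2*R) ^ (2*r) * (‖Δ‖ * ‖Δ‖)) :=
      mul_le_mul_of_nonneg_left (mul_le_mul_of_nonneg_right hb1 hΔnn) hLGn
    have m2 : LF * K * ((1 + ‖θ‖ + ‖θ'‖) ^ (2*r) * (‖Δ‖ * ‖Δ‖)) ≤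
        LF * K * ((1 + 2*R) ^ (2*r) * (‖Δ‖ * ‖Δ‖)) :=
      mul_le_mul_of_nonneg_left (mul_le_mul_of_nonneg_right hb2 hΔnn) hLFK
    have m3 : (0:ℝ) ≤ (1 + 2*R) ^ (2*r) * (‖Δ‖ * ‖Δ‖) := mul_nonneg hnn hΔnn
    linarith [hGbd, hFlip, m1, m2, m3]
  · -- large case
    have hs := norm_nonneg θ
    have ht := norm_nonneg θ'
    have h1 := hGsig ‖θ‖ ‖θ'‖ hs ht hcase
    have h2 := hvar ‖θ‖ hs
    have h3 := hvar ‖θ'‖ ht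
    have hLGn := hLG.le
    have hLFK : 0 ≤ LF * K := mul_nonneg hLF.le hKnn
    rw [hLR, hLh, hsq]
    -- coefficient inequality
    have hscal : -( (LG + LF*K + 1) * (1 + 2*R)^(2*r) ) ≤
        a * (‖θ‖ ^ (2*r) + ‖θ'‖ ^ (2*r)) - b * (‖θ‖ ^ rbar + ‖θ'‖ ^ rbar)
          - LG * (1 + ‖θ‖ + ‖θ'‖) ^ (q-1) := by
      have m3 : (0:ℝ) ≤ LG * (1 + 2*R) ^ (2*r) := mul_nonneg hLGn hnn
      linarith [h1, h2, h3, hbR, hnn, m3]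
    linarith [hGbd, hFdrift, mul_le_mul_of_nonneg_right hscal hΔnn]
end
end

section
/- Let h : ℝ^d → ℝ^d be continuous and satisfy the dissipativity condition ⟨θ, h(θ)⟩ ≥ a_h|θ|² − b_h for all θ ∈ ℝ^d with constants a_h, b_h > 0, and let β > 0. Then for every integer p ≥ 2 and every θ ∈ ℝ^d, the Lyapunov function V_p(θ) := (1+|θ|²)^{p/2} satisfies the drift condition ΔV_p(θ)/β − ⟨∇V_p(θ), h(θ)⟩ ≤ −c_{V,1}(p) V_p(θ) + c_{V,2}(p), where c_{V,1}(p) := a_h p/4, c_{V,2}(p) := (3/4) a_h p · v_p(M_V(p)) with v_p(w) := (1+w²)^{p/2} and M_V(p) := (1/3 + 4b_h/(3a_h) + 4d/(3a_h β) + 4(p−2)/(3a_h β))^{1/2}, and Δ denotes the Laplacian. -/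
open MeasureTheory ProbabilityTheory Filter
open scoped ENNReal NNReal RealInnerProductSpace

noncomputable section

set_option maxHeartbeats 1000000

/-- The Laplacian of a function on `ℝ^d`, as the sum of second partial derivatives. -/
noncomputable def laplacian {d : ℕ} (f : EuclideanSpace ℝ (Fin d) → ℝ)
    (θ : EuclideanSpace ℝ (Fin d)) : ℝ :=
  ∑ i : Fin d, fderiv ℝ (fun y => fderiv ℝ f y (EuclideanSpace.single i (1 : ℝ))) θ
    (EuclideanSpace.single i (1 : ℝ))

section AuxLemmas

variable {d : ℕ}

lemma one_add_normsq_pos (y : EuclideanSpace ℝ (Fin d)) : (0:ℝ) < 1 + ‖y‖ ^ 2 := by positivity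

lemma hasFDerivAt_V (q : ℝ) (y : EuclideanSpace ℝ (Fin d)) :
    HasFDerivAt (fun z : EuclideanSpace ℝ (Fin d) => (1 + ‖z‖ ^ 2) ^ q)
      ((q * (1 + ‖y‖ ^ 2) ^ (q - 1)) • (2 • innerSL ℝ y)) y := by
  have hc : HasFDerivAt (fun z : EuclideanSpace ℝ (Fin d) => 1 + ‖z‖ ^ 2)
      (2 • innerSL ℝ y) y := ((hasStrictFDerivAt_norm_sq y).hasFDerivAt).const_add 1
  have hg : HasDerivAt (fun t : ℝ => t ^ q) (q * (1 + ‖y‖ ^ 2) ^ (q - 1)) (1 + ‖y‖ ^ 2) :=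
    Real.hasDerivAt_rpow_const (Or.inl (ne_of_gt (one_add_normsq_pos y)))
  exact hg.comp_hasFDerivAt y hc

lemma gradient_V (q : ℝ) (θ : EuclideanSpace ℝ (Fin d)) :
    gradient (fun z : EuclideanSpace ℝ (Fin d) => (1 + ‖z‖ ^ 2) ^ q) θ
      = (2 * q * (1 + ‖θ‖ ^ 2) ^ (q - 1)) • θ := by
  have hgrad : HasGradientAt (fun z : EuclideanSpace ℝ (Fin d) => (1 + ‖z‖ ^ 2) ^ q)
      ((2 * q * (1 + ‖θ‖ ^ 2) ^ (q - 1)) • θ) θ := by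
    rw [hasGradientAt_iff_hasFDerivAt]
    refine (hasFDerivAt_V q θ).congr_fderiv ?_
    ext z
    simp [InnerProductSpace.toDual_apply_apply, real_inner_smul_left]
    ring
  exact hgrad.gradient

lemma fderiv_apply_e (q : ℝ) (i : Fin d) (y : EuclideanSpace ℝ (Fin d)) :
    fderiv ℝ (fun z : EuclideanSpace ℝ (Fin d) => (1 + ‖z‖ ^ 2) ^ q) y
        (EuclideanSpace.single i (1:ℝ))
      = 2 * q * ((1 + ‖y‖ ^ 2) ^ (q - 1) * y i) := by
  rw [(hasFDerivAt_V q y).fderiv]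
  simp [EuclideanSpace.inner_single_right]
  ring

lemma normsq_eq_sum (θ : EuclideanSpace ℝ (Fin d)) : ‖θ‖ ^ 2 = ∑ i, θ i ^ 2 := by
  rw [EuclideanSpace.norm_eq, Real.sq_sqrt (by positivity)]
  simp [sq_abs]

lemma laplacian_V (q : ℝ) (θ : EuclideanSpace ℝ (Fin d)) :
    laplacian (fun z : EuclideanSpace ℝ (Fin d) => (1 + ‖z‖ ^ 2) ^ q) θ
      = 2 * q * d * (1 + ‖θ‖ ^ 2) ^ (q - 1)
        + 4 * q * (q - 1) * (1 + ‖θ‖ ^ 2) ^ (q - 2) * ‖θ‖ ^ 2 := by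
  unfold laplacian
  have key : ∀ i : Fin d,
      fderiv ℝ (fun y : EuclideanSpace ℝ (Fin d) =>
          fderiv ℝ (fun z : EuclideanSpace ℝ (Fin d) => (1 + ‖z‖ ^ 2) ^ q) y
            (EuclideanSpace.single i (1:ℝ))) θ (EuclideanSpace.single i (1:ℝ))
        = 2 * q * (1 + ‖θ‖ ^ 2) ^ (q - 1)
          + 4 * q * (q - 1) * (1 + ‖θ‖ ^ 2) ^ (q - 2) * θ i ^ 2 := by
    intro i
    have heq : (fun y : EuclideanSpace ℝ (Fin d) =>
        fderiv ℝ (fun z : EuclideanSpace ℝ (Fin d) => (1 + ‖z‖ ^ 2) ^ q) y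
          (EuclideanSpace.single i (1:ℝ)))
        = fun y : EuclideanSpace ℝ (Fin d) => 2 * q * ((1 + ‖y‖ ^ 2) ^ (q - 1) * y i) :=
      funext (fderiv_apply_e q i)
    rw [heq]
    have hu := hasFDerivAt_V (d := d) (q - 1) θ
    have hv : HasFDerivAt (𝕜 := ℝ) (fun y : EuclideanSpace ℝ (Fin d) => y i)
        (EuclideanSpace.proj (𝕜 := ℝ) (ι := Fin d) i) θ :=
      (EuclideanSpace.proj (𝕜 := ℝ) (ι := Fin d) i).hasFDerivAt (x := θ)
    have hprod := (hu.mul hv).const_mul (2 * q)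
    rw [HasFDerivAt.fderiv (f := fun y : EuclideanSpace ℝ (Fin d) => 2 * q * ((1 + ‖y‖ ^ 2) ^ (q - 1) * y i)) hprod]
    simp [EuclideanSpace.inner_single_right, PiLp.proj_apply,
      EuclideanSpace.single_apply]
    ring
  rw [Finset.sum_congr rfl (fun i _ => key i)]
  rw [Finset.sum_add_distrib, Finset.sum_const, ← Finset.mul_sum, ← normsq_eq_sum]
  simp [Finset.card_univ]
  ring

end AuxLemmas

theorem lyapunov_drift_condition (d : ℕ) (hd : 0 < d)
    (h : EuclideanSpace ℝ (Fin d) → EuclideanSpace ℝ (Fin d)) (hcont : Continuous h)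
    (ah bh : ℝ) (hah : 0 < ah) (hbh : 0 < bh)
    (hdiss : ∀ θ : EuclideanSpace ℝ (Fin d), ah * ‖θ‖ ^ 2 - bh ≤ ⟪θ, h θ⟫)
    (β : ℝ) (hβ : 0 < β) (p : ℕ) (hp : 2 ≤ p) :
    ∀ θ : EuclideanSpace ℝ (Fin d),
      laplacian (fun y => (1 + ‖y‖ ^ 2) ^ ((p : ℝ) / 2)) θ / β
          - ⟪gradient (fun y => (1 + ‖y‖ ^ 2) ^ ((p : ℝ) / 2)) θ, h θ⟫
        ≤ -(ah * (p : ℝ) / 4) * (1 + ‖θ‖ ^ 2) ^ ((p : ℝ) / 2)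
          + (3 / 4) * ah * (p : ℝ) *
            (1 + (Real.sqrt (1 / 3 + 4 * bh / (3 * ah) + 4 * (d : ℝ) / (3 * ah * β)
              + 4 * ((p : ℝ) - 2) / (3 * ah * β))) ^ 2) ^ ((p : ℝ) / 2) := by
  intro θ
  have hr2 : (2:ℝ) ≤ (p:ℝ) := by exact_mod_cast hp
  have hr0 : (0:ℝ) < (p:ℝ) := by linarith
  have hM2 : (0:ℝ) ≤ 1 / 3 + 4 * bh / (3 * ah) + 4 * (d : ℝ) / (3 * ah * β)
      + 4 * ((p : ℝ) - 2) / (3 * ah * β) := by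
    have h1 : (0:ℝ) ≤ 4 * bh / (3 * ah) := by positivity
    have h2 : (0:ℝ) ≤ 4 * (d : ℝ) / (3 * ah * β) := by positivity
    have h3 : (0:ℝ) ≤ 4 * ((p : ℝ) - 2) / (3 * ah * β) := by
      apply div_nonneg (by linarith) (by positivity)
    linarith
  rw [laplacian_V ((p:ℝ)/2) θ, gradient_V ((p:ℝ)/2) θ, real_inner_smul_left,
    Real.sq_sqrt hM2]
  set r : ℝ := (p : ℝ) with hrdef
  set n : ℝ := ‖θ‖ ^ 2 with hndef
  have hn0 : 0 ≤ n := by positivity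
  set c : ℝ := 1 + n with hcdef
  have hc0 : (0:ℝ) < c := by simp only [hcdef]; linarith
  set M2 : ℝ := 1 / 3 + 4 * bh / (3 * ah) + 4 * (d : ℝ) / (3 * ah * β)
      + 4 * (r - 2) / (3 * ah * β) with hM2def
  set G : ℝ := c ^ (r / 2 - 1) with hGdef
  set c2 : ℝ := c ^ (r / 2 - 2) with hc2def
  set V : ℝ := c ^ (r / 2) with hVdef
  set W : ℝ := (1 + M2) ^ (r / 2) with hWdef
  have hG0 : 0 ≤ G := Real.rpow_nonneg (le_of_lt hc0) _
  have hc20 : 0 ≤ c2 := Real.rpow_nonneg (le_of_lt hc0) _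
  have hV0 : 0 ≤ V := Real.rpow_nonneg (le_of_lt hc0) _
  have hW0 : 0 ≤ W := Real.rpow_nonneg (by linarith) _
  clear_value r n c M2 G c2 V W
  have hGc : G * c = V := by
    rw [hGdef, hVdef]
    have hx := Real.rpow_add hc0 (r / 2 - 1) 1
    rw [Real.rpow_one] at hx
    rw [← hx]
    congr 1
    ring
  have hc2c : c2 * c = G := by
    rw [hc2def, hGdef]
    have hx := Real.rpow_add hc0 (r / 2 - 2) 1
    rw [Real.rpow_one] at hx
    rw [← hx]
    congr 1
    ring
  set C : ℝ := ah + bh + ((d : ℝ) + (r - 2)) / β with hCdef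
  clear_value C
  have hCeq : C = (3 / 4) * ah * (1 + M2) := by
    rw [hCdef, hM2def]
    field_simp
    ring
  have hC0 : 0 ≤ C := by
    rw [hCdef]
    have : (0:ℝ) ≤ ((d : ℝ) + (r - 2)) / β := by
      apply div_nonneg _ (le_of_lt hβ)
      have : (0:ℝ) ≤ (d:ℝ) := Nat.cast_nonneg d
      linarith
    linarith
  -- Key inequality
  have key : G * C ≤ (3 / 4) * ah * W + (3 / 4) * ah * V := by
    rcases le_or_gt c (1 + M2) with hle | hgt
    · have hGle : G ≤ (1 + M2) ^ (r / 2 - 1) := by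
        rw [hGdef]
        exact Real.rpow_le_rpow (le_of_lt hc0) hle (by linarith)
      have hWE : (1 + M2) ^ (r / 2 - 1) * (1 + M2) = W := by
        rw [hWdef]
        have hx := Real.rpow_add (show (0:ℝ) < 1 + M2 by linarith) (r / 2 - 1) 1
        rw [Real.rpow_one] at hx
        rw [← hx]
        congr 1
        ring
      have h1 : G * C ≤ (1 + M2) ^ (r / 2 - 1) * C :=
        mul_le_mul_of_nonneg_right hGle hC0
      have h2 : (1 + M2) ^ (r / 2 - 1) * C = (3 / 4) * ah * W := by
        rw [hCeq, ← hWE]; ring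
      nlinarith [mul_nonneg (mul_nonneg (by norm_num : (0:ℝ) ≤ (3:ℝ)/4) (le_of_lt hah)) hV0]
    · have hCle : C ≤ (3 / 4) * ah * c := by
        rw [hCeq]
        have := mul_le_mul_of_nonneg_left (le_of_lt hgt) (le_of_lt hah)
        nlinarith [this]
      have h1 : G * C ≤ G * ((3 / 4) * ah * c) := mul_le_mul_of_nonneg_left hCle hG0
      have h2 : G * ((3 / 4) * ah * c) = (3 / 4) * ah * V := by rw [← hGc]; ring
      nlinarith [mul_nonneg (mul_nonneg (by norm_num : (0:ℝ) ≤ (3:ℝ)/4) (le_of_lt hah)) hW0]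
  -- main chain
  have hf1 : c2 * n ≤ G := by
    calc c2 * n ≤ c2 * c := by
          apply mul_le_mul_of_nonneg_left _ hc20
          rw [hcdef]; linarith
      _ = G := hc2c
  have hf2 : ah * n - bh ≤ ⟪θ, h θ⟫ := by rw [hndef]; exact hdiss θ
  have A1 : r * (r - 2) * (c2 * n) ≤ r * (r - 2) * G := by
    apply mul_le_mul_of_nonneg_left hf1
    nlinarith
  have A2 : r * G * (ah * n - bh) ≤ r * G * ⟪θ, h θ⟫ :=
    mul_le_mul_of_nonneg_left hf2 (mul_nonneg (le_of_lt hr0) hG0)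
  have A3 : (r * (d:ℝ) * G + r * (r - 2) * G) / β - r * G * (ah * n - bh)
      = r * (G * C) - ah * r * V := by
    rw [hCdef]
    linear_combination (-(ah * r)) * hGc + (ah * r * G) * hcdef
  have A4 : r * (G * C) ≤ 3 / 4 * ah * r * W + 3 / 4 * ah * r * V := by
    nlinarith [mul_le_mul_of_nonneg_left key (le_of_lt hr0)]
  have B1 : (2 * (r / 2) * (d:ℝ) * G + 4 * (r / 2) * (r / 2 - 1) * c2 * n) / β
      ≤ (r * (d:ℝ) * G + r * (r - 2) * G) / β := by
    apply div_le_div_of_nonneg_right ?_ hβ.le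
    nlinarith [A1]
  linarith [B1, A2, A3, A4]
end
end

section
/- In the one-dimensional artificial example, with q = 3, r = 14, ρ = 1, the following hold: (1) u is continuously differentiable and Assumption 1 holds; (2) Assumption 2 holds with L_G = (4 + 5c_X + 2L_X)(1+|a₁|+|a₂|) and K_G = (4 + 2c_X)(1+|a₁|+|a₂|); (3) Assumption 3 holds with L_F = 870 and K_F = 30; (4) Assumption 4 holds with A(x) = 15, B(x) = 0, r̄ = 0, a = 15, b = 0. -/
open MeasureTheory ProbabilityTheory Filter
open scoped ENNReal NNReal RealInnerProductSpace

noncomputable section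
open Set

namespace ArtAux


def kk (θ : ℝ) : ℝ := max (-1) (min 1 θ)
def mm (θ : ℝ) : ℝ := if |θ| ≤ 1 then θ^2 else 2*|θ| - 1

lemma kk_abs_le (θ : ℝ) : |kk θ| ≤ 1 := by
  rw [abs_le]; unfold kk
  constructor
  · exact le_max_left _ _
  · exact max_le (by norm_num) (min_le_left _ _)

lemma kk_lipschitz (θ θ' : ℝ) : |kk θ - kk θ'| ≤ |θ - θ'| := by
  have h1 : LipschitzWith 1 kk := by
    have h := (LipschitzWith.id.const_min (1:ℝ)).const_max (-1)
    have hkk : kk = fun x : ℝ => -1 ⊔ 1 ⊓ id x := by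
      funext x; simp [kk]
    rw [hkk]; exact h
  simpa [Real.dist_eq] using h1.dist_le_mul θ θ'

lemma continuous_kk : Continuous kk := by
  unfold kk; fun_prop

lemma mm_eq_sq {θ : ℝ} (h : |θ| ≤ 1) : mm θ = θ^2 := if_pos h
lemma mm_eq_lin {θ : ℝ} (h : ¬ |θ| ≤ 1) : mm θ = 2*|θ| - 1 := if_neg h

lemma hasDerivAt_mm (θ : ℝ) : HasDerivAt mm (2 * kk θ) θ := by
  rcases lt_trichotomy (|θ|) 1 with h | h | h
  · -- interior
    have hk : kk θ = θ := by
      unfold kk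
      rw [abs_lt] at h
      rw [min_eq_right h.2.le, max_eq_right h.1.le]
    have hev : mm =ᶠ[nhds θ] fun t => t^2 := by
      have : ∀ᶠ t in nhds θ, |t| < 1 :=
        (continuous_abs.continuousAt (x := θ)).eventually_lt_const h
      filter_upwards [this] with t ht
      exact mm_eq_sq ht.le
    rw [hk]
    exact (HasDerivAt.congr_of_eventuallyEq (by simpa using (hasDerivAt_pow 2 θ)) hev)
  · -- boundary
    rcases abs_eq (by norm_num : (0:ℝ) ≤ 1) |>.mp h with h1 | h1
    · -- θ = 1
      subst h1
      have hk : kk 1 = 1 := by unfold kk; norm_num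
      rw [hk, mul_one]
      have hIci : HasDerivWithinAt mm 2 (Ici 1) 1 := by
        have hlin : HasDerivWithinAt (fun t : ℝ => 2*t - 1) 2 (Ici 1) 1 := by
          simpa using ((hasDerivAt_id (1:ℝ)).const_mul 2 |>.sub_const 1).hasDerivWithinAt
        refine hlin.congr (fun t ht => ?_) (by unfold mm; norm_num)
        rcases eq_or_lt_of_le (Set.mem_Ici.mp ht) with rfl | ht'
        · unfold mm; norm_num
        · rw [mm_eq_lin (by rw [abs_of_pos (by linarith)]; linarith),
            abs_of_pos (by linarith)]
      have hIic : HasDerivWithinAt mm 2 (Iic 1) 1 := by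
        have hsq : HasDerivWithinAt (fun t : ℝ => t^2) 2 (Iic 1) 1 := by
          simpa using (hasDerivAt_pow 2 (1:ℝ)).hasDerivWithinAt
        refine hsq.congr_of_eventuallyEq ?_ (by unfold mm; norm_num)
        have : ∀ᶠ t in nhdsWithin (1:ℝ) (Iic 1), t ∈ Ioi (-1 : ℝ) :=
          eventually_nhdsWithin_of_eventually_nhds
            ((Ioi_mem_nhds (by norm_num) : Set.Ioi (-1:ℝ) ∈ nhds (1:ℝ)))
        filter_upwards [this, eventually_mem_nhdsWithin] with t ht ht'
        exact mm_eq_sq (abs_le.mpr ⟨le_of_lt ht, ht'⟩)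
      have h := hIic.union hIci
      rw [Iic_union_Ici] at h
      exact hasDerivWithinAt_univ.mp h
    · -- θ = -1
      subst h1
      have hk : kk (-1) = -1 := by unfold kk; norm_num
      rw [hk]
      have hIic : HasDerivWithinAt mm (2 * -1) (Iic (-1)) (-1) := by
        have hlin : HasDerivWithinAt (fun t : ℝ => -2*t - 1) (2 * -1) (Iic (-1)) (-1) := by
          simpa using ((hasDerivAt_id (-1:ℝ)).const_mul (-2) |>.sub_const 1).hasDerivWithinAt
        refine hlin.congr (fun t ht => ?_) (by unfold mm; norm_num)
        rcases eq_or_lt_of_le (Set.mem_Iic.mp ht) with rfl | ht'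
        · unfold mm; norm_num
        · rw [mm_eq_lin (by rw [abs_of_neg (by linarith)]; linarith),
            abs_of_neg (by linarith)]; ring
      have hIci : HasDerivWithinAt mm (2 * -1) (Ici (-1)) (-1) := by
        have hsq : HasDerivWithinAt (fun t : ℝ => t^2) (2 * -1) (Ici (-1)) (-1) := by
          simpa using (hasDerivAt_pow 2 (-1:ℝ)).hasDerivWithinAt
        refine hsq.congr_of_eventuallyEq ?_ (by unfold mm; norm_num)
        have : ∀ᶠ t in nhdsWithin (-1:ℝ) (Ici (-1)), t ∈ Iio (1 : ℝ) :=
          eventually_nhdsWithin_of_eventually_nhds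
            ((Iio_mem_nhds (by norm_num) : Set.Iio (1:ℝ) ∈ nhds (-1:ℝ)))
        filter_upwards [this, eventually_mem_nhdsWithin] with t ht ht'
        exact mm_eq_sq (abs_le.mpr ⟨ht', le_of_lt ht⟩)
      have h := hIic.union hIci
      rw [Iic_union_Ici] at h
      exact hasDerivWithinAt_univ.mp h
  · -- exterior
    rcases lt_or_ge θ 0 with hθ | hθ
    · have hθ1 : θ < -1 := by rw [abs_of_neg hθ] at h; linarith
      have hk : kk θ = -1 := by
        unfold kk; rw [min_eq_right (by linarith), max_eq_left (by linarith)]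
      have hev : mm =ᶠ[nhds θ] fun t => -2*t - 1 := by
        have : ∀ᶠ t in nhds θ, t < -1 :=
          (continuous_id.continuousAt (x := θ)).eventually_lt_const hθ1
        filter_upwards [this] with t ht
        rw [mm_eq_lin (by rw [abs_of_neg (by linarith)]; linarith),
          abs_of_neg (by linarith)]; ring
      rw [hk]
      exact HasDerivAt.congr_of_eventuallyEq
        (by simpa using ((hasDerivAt_id θ).const_mul (-2) |>.sub_const 1)) hev
    · have hθ1 : 1 < θ := by rw [abs_of_nonneg hθ] at h; linarith
      have hk : kk θ = 1 := by
        unfold kk; rw [min_eq_left (by linarith), max_eq_right (by linarith)]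
      have hev : mm =ᶠ[nhds θ] fun t => 2*t - 1 := by
        have : ∀ᶠ t in nhds θ, 1 < t :=
          (continuous_id.continuousAt (x := θ)).eventually_const_lt hθ1
        filter_upwards [this] with t ht
        rw [mm_eq_lin (by rw [abs_of_pos (by linarith)]; linarith),
          abs_of_pos (by linarith)]
      rw [hk]
      exact HasDerivAt.congr_of_eventuallyEq
        (by simpa using ((hasDerivAt_id θ).const_mul 2 |>.sub_const 1)) hev

lemma mm_lipschitz (θ θ' : ℝ) : |mm θ - mm θ'| ≤ 2 * |θ - θ'| := by
  have hdiff : Differentiable ℝ mm := fun t => (hasDerivAt_mm t).differentiableAt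
  have h2 : LipschitzWith 2 mm := by
    apply lipschitzWith_of_nnnorm_deriv_le hdiff
    intro t
    rw [(hasDerivAt_mm t).deriv]
    have := kk_abs_le t
    rw [← NNReal.coe_le_coe]
    push_cast
    rw [Real.norm_eq_abs, abs_mul, abs_two]
    nlinarith [abs_nonneg (kk t)]
  simpa [Real.dist_eq] using h2.dist_le_mul θ θ'

lemma mm_nonneg (θ : ℝ) : 0 ≤ mm θ := by
  unfold mm; split
  · positivity
  · next h => rw [not_le] at h; linarith

lemma mm_le (θ : ℝ) : mm θ ≤ (1 + |θ|)^2 := by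
  unfold mm
  have := abs_nonneg θ
  split <;> nlinarith [sq_abs θ]

lemma continuous_mm : Continuous mm :=
  continuous_iff_continuousAt.mpr fun t => (hasDerivAt_mm t).continuousAt

lemma kk_eq_self {θ : ℝ} (h : |θ| ≤ 1) : kk θ = θ := by
  rw [abs_le] at h
  unfold kk
  rw [min_eq_right h.2, max_eq_right h.1]

lemma kk_eq_one {θ : ℝ} (h : 1 < θ) : kk θ = 1 := by
  unfold kk
  rw [min_eq_left h.le, max_eq_right (by norm_num : (-1:ℝ) ≤ 1)]

lemma kk_eq_neg_one {θ : ℝ} (h : θ < -1) : kk θ = -1 := by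
  unfold kk
  rw [min_eq_right (by linarith), max_eq_left (by linarith)]

end ArtAux

open Finset in
private lemma abs_pow_sub_pow' (x y : ℝ) (n : ℕ) :
    |x ^ n - y ^ n| ≤ n * (1 + |x| + |y|) ^ (n - 1) * |x - y| := by
  have hB : (0:ℝ) ≤ 1 + |x| + |y| := by positivity
  rw [← geom_sum₂_mul, abs_mul]
  gcongr
  calc |∑ i ∈ range n, x ^ i * y ^ (n - 1 - i)|
      ≤ ∑ i ∈ range n, |x ^ i * y ^ (n - 1 - i)| := Finset.abs_sum_le_sum_abs _ _
    _ ≤ ∑ _i ∈ range n, (1 + |x| + |y|) ^ (n - 1) := by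
        apply Finset.sum_le_sum
        intro i hi
        rw [abs_mul, abs_pow, abs_pow]
        calc |x| ^ i * |y| ^ (n - 1 - i)
            ≤ (1 + |x| + |y|) ^ i * (1 + |x| + |y|) ^ (n - 1 - i) := by
              gcongr <;> [linarith [abs_nonneg y]; linarith [abs_nonneg x]]
          _ = (1 + |x| + |y|) ^ (n - 1) := by
              rw [← pow_add]
              congr 1
              have := Finset.mem_range.mp hi
              omega
    _ = n * (1 + |x| + |y|) ^ (n - 1) := by
        rw [Finset.sum_const, Finset.card_range, nsmul_eq_mul]

private lemma convex_part (θ θ' : ℝ) :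
    15 * (θ - θ') ^ 2 * (θ ^ 28 + θ' ^ 28) ≤ (θ - θ') * (30 * θ ^ 29 - 30 * θ' ^ 29) := by
  have key : 0 ≤ (θ^2 - θ'^2) * ((θ^2)^14 - (θ'^2)^14) := by
    rcases le_total (θ^2) (θ'^2) with h | h
    · have h2 := pow_le_pow_left₀ (sq_nonneg θ) h 14
      rw [show (θ^2 - θ'^2) * ((θ^2)^14 - (θ'^2)^14)
          = (θ'^2 - θ^2) * ((θ'^2)^14 - (θ^2)^14) by ring]
      exact mul_nonneg (by linarith) (by linarith)
    · have h2 := pow_le_pow_left₀ (sq_nonneg θ') h 14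
      exact mul_nonneg (by linarith) (by linarith)
  nlinarith [key]

private lemma arith_LG (ca cc S cX LX d t t' : ℝ) (hca : 0 ≤ ca) (hcc : 0 ≤ cc)
    (h1 : ca ≤ S) (h2 : cc ≤ S) (hd : 0 ≤ d) (hcX : 0 ≤ cX) (hLX : 0 ≤ LX)
    (ht : 0 ≤ t) (ht' : 0 ≤ t') :
    2*ca*d + 2*cc*d + cc*(2*cX*d + (1+t')^2*(LX*d)) + 2*cc*(cX*d)
      ≤ (4+5*cX+2*LX)*(1+S)*((1+t+t')^2*d) := by
  have hT2 : (1:ℝ) ≤ (1+t+t')^2 := by nlinarith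
  have hE : (1+t')^2 ≤ (1+t+t')^2 := by nlinarith
  have hS : 0 ≤ S := le_trans hca h1
  have hdT : d ≤ (1+t+t')^2 * d := by nlinarith [mul_nonneg hd (sub_nonneg.mpr hT2)]
  have hP0 : (0:ℝ) ≤ (1+S)*((1+t+t')^2*d) := by positivity
  have k1 : ca*d ≤ (1+S)*((1+t+t')^2*d) :=
    mul_le_mul (by linarith) hdT hd (by linarith)
  have k2 : cc*d ≤ (1+S)*((1+t+t')^2*d) :=
    mul_le_mul (by linarith) hdT hd (by linarith)
  have k3 : cc*(cX*d) ≤ cX*((1+S)*((1+t+t')^2*d)) := by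
    rw [show cc*(cX*d) = cX*(cc*d) by ring]
    exact mul_le_mul_of_nonneg_left k2 hcX
  have k4 : cc*((1+t')^2*(LX*d)) ≤ LX*((1+S)*((1+t+t')^2*d)) := by
    rw [show cc*((1+t')^2*(LX*d)) = LX*(cc*((1+t')^2*d)) by ring]
    apply mul_le_mul_of_nonneg_left _ hLX
    exact mul_le_mul (by linarith) (mul_le_mul_of_nonneg_right hE hd) (by positivity)
      (by linarith)
  have pos1 : (0:ℝ) ≤ cX*((1+S)*((1+t+t')^2*d)) := by positivity
  have pos2 : (0:ℝ) ≤ LX*((1+S)*((1+t+t')^2*d)) := by positivity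
  nlinarith [k1, k2, k3, k4, pos1, pos2]

private lemma arith_KG (bb cc S cX xx t : ℝ) (hbb : 0 ≤ bb) (hcc : 0 ≤ cc)
    (h1 : bb ≤ S) (h2 : cc ≤ S) (hcX : 0 ≤ cX) (hxx : 0 ≤ xx) (ht : 0 ≤ t) :
    2*(bb + cc) + cc*((1+t)^2*cX) ≤ (4+2*cX)*(1+S)*((1+xx)*(1+t)^3) := by
  have hS : 0 ≤ S := le_trans hbb h1
  have h3 : (1:ℝ) ≤ (1+t)^3 := one_le_pow₀ (by linarith)
  have hP1 : (1:ℝ) ≤ (1+xx)*(1+t)^3 := by nlinarith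
  have hQ : (1+t)^2 ≤ (1+xx)*(1+t)^3 := by
    nlinarith [mul_nonneg hxx (pow_nonneg (by linarith : (0:ℝ) ≤ 1+t) 3),
      pow_le_pow_right₀ (by linarith : (1:ℝ) ≤ 1+t) (by norm_num : 2 ≤ 3)]
  have key1 : 2*(bb+cc) ≤ 4*((1+S)*((1+xx)*(1+t)^3)) := by
    nlinarith [mul_nonneg (by linarith : (0:ℝ) ≤ 1+S) (sub_nonneg.mpr hP1)]
  have key2 : cc*((1+t)^2*cX) ≤ cX*((1+S)*((1+xx)*(1+t)^3)) := by
    rw [show cc*((1+t)^2*cX) = cX*(cc*(1+t)^2) by ring]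
    apply mul_le_mul_of_nonneg_left _ hcX
    exact mul_le_mul (by linarith) hQ (by positivity) (by linarith)
  have pos : (0:ℝ) ≤ cX*((1+S)*((1+xx)*(1+t)^3)) := by positivity
  nlinarith [key1, key2, pos]

set_option maxHeartbeats 2000000 in

theorem artificial_example_satisfies_assumptions
    {Ω : Type*} [MeasurableSpace Ω] (μ : Measure Ω) [IsProbabilityMeasure μ]
    (a₁ a₂ : ℝ)
    (θ₀ : Ω → ℝ) (hθ₀meas : Measurable θ₀)
    (X : ℕ → Ω → ℝ) (hXmeas : ∀ n, Measurable (X n))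
    (hXiid : ∀ n, μ.map (X n) = μ.map (X 0))
    (hXindep : iIndepFun X μ)
    (fX : ℝ → ℝ) (hfnonneg : ∀ x, 0 ≤ fX x)
    (LX cX : ℝ) (hLX : 0 ≤ LX) (hcX : 0 ≤ cX)
    (hflip : LipschitzWith (Real.toNNReal LX) fX)
    (hfbd : ∀ x, fX x ≤ cX)
    (hdens : μ.map (X 0) = volume.withDensity fun x => ENNReal.ofReal (fX x))
    (hmom : Integrable (fun ω => |θ₀ ω| ^ 116 + |X 0 ω| ^ 116) μ) :
    let U : ℝ → ℝ → ℝ := fun θ x =>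
      if |θ| ≤ 1 then
        a₁ * θ ^ 2 * (if x ≤ θ then 1 else 0) + a₂ * θ ^ 2 * (if x ≤ θ then 0 else 1) + θ ^ 30
      else
        (2 * a₁ * |θ| + -a₁) * (if x ≤ θ then 1 else 0)
          + (2 * a₂ * |θ| + -a₂) * (if x ≤ θ then 0 else 1) + θ ^ 30
    let u : ℝ → ℝ := fun θ => ∫ ω, U θ (X 0 ω) ∂μ
    let F : ℝ → ℝ → ℝ := fun θ _ => 30 * θ ^ 29
    let G : ℝ → ℝ → ℝ := fun θ x =>
      if |θ| ≤ 1 then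
        2 * a₂ * θ + 2 * (a₁ - a₂) * θ * (if x ≤ θ then 1 else 0) + (a₁ - a₂) * θ ^ 2 * fX θ
      else
        2 * (a₂ + (a₁ - a₂) * (if x ≤ θ then 1 else 0)) *
            ((if (1 : ℝ) < θ then 1 else 0) - (if θ < -1 then 1 else 0))
          + (a₁ - a₂) * (2 * |θ| - 1) * fX θ
    let LG := (4 + 5 * cX + 2 * LX) * (1 + |a₁| + |a₂|)
    let KG := (4 + 2 * cX) * (1 + |a₁| + |a₂|)
    -- (1) u is continuously differentiable and Assumption 1 holds
    (ContDiff ℝ 1 u ∧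
      Integrable (fun ω => |θ₀ ω| ^ (4 * (2 * 14 + 1))) μ ∧
      Integrable (fun ω => |X 0 ω| ^ ((4 * (2 * (14 : ℝ) + 1)) * 1)) μ ∧
      ∀ θ, deriv u θ = ∫ ω, (F θ (X 0 ω) + G θ (X 0 ω)) ∂μ) ∧
    -- (2) Assumption 2 with the explicit constants
    ((∀ θ θ' : ℝ, ∫ ω, |G θ (X 0 ω) - G θ' (X 0 ω)| ∂μ ≤
        LG * (1 + |θ| + |θ'|) ^ ((3 : ℝ) - 1) * |θ - θ'|) ∧
      (∀ θ x : ℝ, |G θ x| ≤ KG * (1 + |x|) ^ ((1 : ℝ)) * (1 + |θ|) ^ ((3 : ℝ)))) ∧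
    -- (3) Assumption 3 with L_F = 870, K_F = 30
    ((∀ θ θ' x x' : ℝ, |F θ x - F θ' x'| ≤
        870 * (1 + |x| + |x'|) ^ ((1 : ℝ) - 1) * (1 + |θ| + |θ'|) ^ (2 * 14) *
          (|θ - θ'| + |x - x'|)) ∧
      (∀ θ x : ℝ, |F θ x| ≤ 30 * (1 + |x|) ^ ((1 : ℝ)) * (1 + |θ| ^ (2 * 14 + 1)))) ∧
    -- (4) Assumption 4 with A(x) = 15, B(x) = 0, r̄ = 0, a = 15, b = 0
    (∀ θ θ' x : ℝ,
      15 * (θ - θ') ^ 2 * (|θ| ^ (2 * 14) + |θ'| ^ (2 * 14))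
          - 0 * (θ - θ') ^ 2 * (|θ| ^ ((0 : ℝ)) + |θ'| ^ ((0 : ℝ)))
        ≤ (θ - θ') * (F θ x - F θ' x)) := by
  intro U u F G LG KG
  have hX0 : Measurable (X 0) := hXmeas 0
  have hfcont : Continuous fX := hflip.continuous
  have hfm : Measurable fX := hfcont.measurable
  have hfLip : ∀ s t : ℝ, |fX s - fX t| ≤ LX * |s - t| := by
    intro s t
    have h := hflip.dist_le_mul s t
    rwa [Real.dist_eq, Real.dist_eq, Real.coe_toNNReal LX hLX] at h
  have hprob : IsProbabilityMeasure (μ.map (X 0)) := Measure.isProbabilityMeasure_map hX0.aemeasurable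
  have hfint : Integrable fX := by
    refine ⟨hfm.aestronglyMeasurable, ?_⟩
    rw [hasFiniteIntegral_iff_ofReal (Eventually.of_forall hfnonneg)]
    have h1 : ∫⁻ x, ENNReal.ofReal (fX x) = 1 := by
      have h2 := hprob.measure_univ
      rwa [hdens, withDensity_apply _ MeasurableSet.univ, Measure.restrict_univ] at h2
    rw [h1]
    exact ENNReal.one_lt_top
  have hsetInt : ∀ s : Set ℝ, MeasurableSet s → ((μ.map (X 0)) s).toReal = ∫ x in s, fX x := by
    intro s hs
    rw [hdens, withDensity_apply _ hs,
      integral_eq_lintegral_of_nonneg_ae (Eventually.of_forall fun x => hfnonneg x)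
        hfm.aestronglyMeasurable.restrict]
  set Φ : ℝ → ℝ := fun t => ∫ x in Iic t, fX x with hΦdef
  have hΦd : ∀ t, HasDerivAt Φ (fX t) t := by
    intro t
    have h0 : Φ = fun s => (∫ x in Iic (0:ℝ), fX x) + ∫ x in (0:ℝ)..s, fX x := by
      funext s
      rw [hΦdef]
      rw [← intervalIntegral.integral_Iic_sub_Iic hfint.integrableOn hfint.integrableOn]
      ring
    rw [h0]
    exact ((intervalIntegral.integral_hasDerivAt_right (hfint.intervalIntegrable)
      (hfcont.stronglyMeasurableAtFilter _ _) hfcont.continuousAt).const_add _)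
  have hΦcont : Continuous Φ := continuous_iff_continuousAt.mpr fun t => (hΦd t).continuousAt
  have hImeas : ∀ θ : ℝ, Measurable fun ω => if X 0 ω ≤ θ then (1:ℝ) else 0 := fun θ =>
    Measurable.ite (measurableSet_le hX0 measurable_const) measurable_const measurable_const
  have hIint : ∀ θ : ℝ, Integrable (fun ω => if X 0 ω ≤ θ then (1:ℝ) else 0) μ := by
    intro θ
    refine (integrable_const (1:ℝ)).mono' (hImeas θ).aestronglyMeasurable ?_
    refine Eventually.of_forall fun ω => ?_
    rw [Real.norm_eq_abs]
    split <;> norm_num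
  have hIeq : ∀ θ : ℝ, ∫ ω, (if X 0 ω ≤ θ then (1:ℝ) else 0) ∂μ = Φ θ := by
    intro θ
    have h1 : (fun ω => if X 0 ω ≤ θ then (1:ℝ) else 0)
        = fun ω => (Iic θ).indicator (fun _ => (1:ℝ)) (X 0 ω) := by
      funext ω
      rw [Set.indicator_apply]
      simp [Set.mem_Iic]
    rw [h1, ← integral_map hX0.aemeasurable
        ((measurable_const.indicator measurableSet_Iic).aestronglyMeasurable),
      integral_indicator_const _ measurableSet_Iic, smul_eq_mul, mul_one]
    exact hsetInt _ measurableSet_Iic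
  have hIdiff : ∀ θ θ' : ℝ, θ' ≤ θ →
      ∫ ω, |(if X 0 ω ≤ θ then (1:ℝ) else 0) - (if X 0 ω ≤ θ' then 1 else 0)| ∂μ
        ≤ cX * (θ - θ') := by
    intro θ θ' hle
    have h2 : (fun ω => |(if X 0 ω ≤ θ then (1:ℝ) else 0) - (if X 0 ω ≤ θ' then 1 else 0)|)
        = fun ω => (Ioc θ' θ).indicator (fun _ => (1:ℝ)) (X 0 ω) := by
      funext ω
      by_cases h2 : X 0 ω ≤ θ'
      · rw [if_pos (h2.trans hle), if_pos h2,
          Set.indicator_of_notMem (fun h => absurd h2 (not_le.mpr (Set.mem_Ioc.mp h).1))]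
        norm_num
      · by_cases h3 : X 0 ω ≤ θ
        · rw [if_pos h3, if_neg h2, Set.indicator_of_mem (Set.mem_Ioc.mpr ⟨not_le.mp h2, h3⟩)]
          norm_num
        · rw [if_neg h3, if_neg h2,
            Set.indicator_of_notMem (fun h => absurd (Set.mem_Ioc.mp h).2 h3)]
          norm_num
    rw [h2, ← integral_map hX0.aemeasurable
        ((measurable_const.indicator measurableSet_Ioc).aestronglyMeasurable),
      integral_indicator_const _ measurableSet_Ioc, smul_eq_mul, mul_one,
      measureReal_def, hsetInt _ measurableSet_Ioc]
    calc ∫ x in Ioc θ' θ, fX x ≤ ∫ _x in Ioc θ' θ, cX :=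
          setIntegral_mono_on hfint.integrableOn
            (integrableOn_const measure_Ioc_lt_top.ne) measurableSet_Ioc
            fun x _ => hfbd x
      _ = cX * (θ - θ') := by
          rw [setIntegral_const, smul_eq_mul, measureReal_def, Real.volume_Ioc,
            ENNReal.toReal_ofReal (by linarith)]
          ring
  have hGeq : ∀ θ x : ℝ, G θ x
      = 2*(a₂ + (a₁-a₂) * (if x ≤ θ then (1:ℝ) else 0)) * ArtAux.kk θ
        + (a₁-a₂) * ArtAux.mm θ * fX θ := by
    intro θ x
    by_cases h1 : |θ| ≤ 1
    · rw [ArtAux.kk_eq_self h1, ArtAux.mm_eq_sq h1]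
      simp only [G, if_pos h1]
      ring
    · have h2 : 1 < |θ| := not_le.mp h1
      rw [ArtAux.mm_eq_lin h1]
      rcases lt_or_ge θ 0 with h3 | h3
      · have h4 : θ < -1 := by rw [abs_of_neg h3] at h2; linarith
        rw [ArtAux.kk_eq_neg_one h4]
        simp only [G, if_neg h1, if_neg (by linarith : ¬ (1:ℝ) < θ), if_pos h4]
        ring
      · have h4 : 1 < θ := by rw [abs_of_nonneg h3] at h2; linarith
        rw [ArtAux.kk_eq_one h4]
        simp only [G, if_neg h1, if_pos h4, if_neg (by linarith : ¬ θ < (-1:ℝ))]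
        ring
  have hUeq : ∀ θ x : ℝ, U θ x
      = (a₁-a₂) * ArtAux.mm θ * (if x ≤ θ then (1:ℝ) else 0)
        + (a₂ * ArtAux.mm θ + θ^30) := by
    intro θ x
    by_cases h1 : |θ| ≤ 1
    · rw [ArtAux.mm_eq_sq h1]
      simp only [U, if_pos h1]
      by_cases h2 : x ≤ θ <;> simp [h2] <;> ring
    · rw [ArtAux.mm_eq_lin h1]
      simp only [U, if_neg h1]
      by_cases h2 : x ≤ θ <;> simp [h2] <;> ring
  have hu : ∀ θ : ℝ, u θ = (a₁-a₂) * ArtAux.mm θ * Φ θ + (a₂ * ArtAux.mm θ + θ^30) := by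
    intro θ
    have h1 : u θ = ∫ ω, ((a₁-a₂) * ArtAux.mm θ * (if X 0 ω ≤ θ then (1:ℝ) else 0)
        + (a₂ * ArtAux.mm θ + θ^30)) ∂μ := by
      simp only [u]
      congr 1
      funext ω
      exact hUeq θ (X 0 ω)
    rw [h1, integral_add ((hIint θ).const_mul _) (integrable_const _), integral_const_mul,
      hIeq θ, integral_const]
    simp [measure_univ]
  have hGrepr : ∀ θ : ℝ, (fun ω => G θ (X 0 ω))
      = fun ω => (2*(a₁-a₂)*ArtAux.kk θ) * (if X 0 ω ≤ θ then (1:ℝ) else 0)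
          + (2*a₂*ArtAux.kk θ + (a₁-a₂)*ArtAux.mm θ*fX θ) := by
    intro θ
    funext ω
    rw [hGeq θ (X 0 ω)]
    ring
  have hGint : ∀ θ : ℝ, Integrable (fun ω => G θ (X 0 ω)) μ := by
    intro θ
    rw [hGrepr θ]
    exact ((hIint θ).const_mul _).add (integrable_const _)
  have hGexp : ∀ θ : ℝ, ∫ ω, G θ (X 0 ω) ∂μ
      = 2*a₂*ArtAux.kk θ + 2*(a₁-a₂)*ArtAux.kk θ*Φ θ + (a₁-a₂)*ArtAux.mm θ*fX θ := by
    intro θ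
    rw [hGrepr θ, integral_add ((hIint θ).const_mul _) (integrable_const _),
      integral_const_mul, hIeq θ, integral_const]
    simp only [measure_univ, ENNReal.toReal_one, probReal_univ, one_smul]
    ring
  have hud : ∀ θ : ℝ, HasDerivAt u
      (2*a₂*ArtAux.kk θ + 2*(a₁-a₂)*ArtAux.kk θ*Φ θ + (a₁-a₂)*ArtAux.mm θ*fX θ + 30*θ^29) θ := by
    intro θ
    have hueq : u = fun t => (a₁-a₂) * ArtAux.mm t * Φ t + (a₂ * ArtAux.mm t + t^30) :=
      funext hu
    rw [hueq]
    have h1 : HasDerivAt (fun t => (a₁-a₂) * ArtAux.mm t * Φ t)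
        ((a₁-a₂) * (2*ArtAux.kk θ * Φ θ + ArtAux.mm θ * fX θ)) θ := by
      have h0 : (fun t => (a₁-a₂) * ArtAux.mm t * Φ t)
          = fun t => (a₁-a₂) * (ArtAux.mm t * Φ t) := by
        funext t
        ring
      rw [h0]
      exact ((ArtAux.hasDerivAt_mm θ).mul (hΦd θ)).const_mul (a₁-a₂)
    have h2 : HasDerivAt (fun t => a₂ * ArtAux.mm t + t^30)
        (a₂*(2*ArtAux.kk θ) + 30*θ^29) θ := by
      have hp : HasDerivAt (fun t : ℝ => t^30) (30*θ^29) θ := by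
        have := hasDerivAt_pow 30 θ
        norm_num at this
        exact this
      exact ((ArtAux.hasDerivAt_mm θ).const_mul a₂).add hp
    have h3 := h1.add h2
    exact h3.congr_deriv (by ring)
  have hDcont : Continuous (fun θ : ℝ => 2*a₂*ArtAux.kk θ + 2*(a₁-a₂)*ArtAux.kk θ*Φ θ
      + (a₁-a₂)*ArtAux.mm θ*fX θ + 30*θ^29) := by
    have c1 := ArtAux.continuous_kk
    have c2 := ArtAux.continuous_mm
    exact (((continuous_const.mul c1).add ((continuous_const.mul c1).mul hΦcont)).add
      ((continuous_const.mul c2).mul hfcont)).add (continuous_const.mul (continuous_pow 29))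
  have key2a : ∀ θ θ' : ℝ, θ' ≤ θ → ∫ ω, |G θ (X 0 ω) - G θ' (X 0 ω)| ∂μ ≤
      LG * ((1 + |θ| + |θ'|)^2) * |θ - θ'| := by
    intro θ θ' hle
    have hd0 : 0 ≤ θ - θ' := sub_nonneg.mpr hle
    have habs : |θ - θ'| = θ - θ' := abs_of_nonneg hd0
    have hpt : ∀ x : ℝ, |G θ x - G θ' x| ≤
        (2*|a₂| *|θ-θ'| + 2*|a₁-a₂| *|θ-θ'|
            + |a₁-a₂| *(2*cX*|θ-θ'| + (1+|θ'|)^2*(LX*|θ-θ'|)))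
          + 2*|a₁-a₂| * |(if x ≤ θ then (1:ℝ) else 0) - (if x ≤ θ' then 1 else 0)| := by
      intro x
      rw [hGeq θ x, hGeq θ' x]
      set I : ℝ := (if x ≤ θ then (1:ℝ) else 0) with hI
      set I' : ℝ := (if x ≤ θ' then (1:ℝ) else 0) with hI'
      have hI1 : |I| ≤ 1 := by rw [hI]; split <;> norm_num
      have e : (2*(a₂ + (a₁-a₂)*I) * ArtAux.kk θ + (a₁-a₂) * ArtAux.mm θ * fX θ)
          - (2*(a₂ + (a₁-a₂)*I') * ArtAux.kk θ' + (a₁-a₂) * ArtAux.mm θ' * fX θ')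
          = 2*a₂*(ArtAux.kk θ - ArtAux.kk θ')
            + 2*(a₁-a₂)*((ArtAux.kk θ - ArtAux.kk θ')*I)
            + 2*(a₁-a₂)*(ArtAux.kk θ'*(I - I'))
            + (a₁-a₂)*(ArtAux.mm θ*fX θ - ArtAux.mm θ'*fX θ') := by
        ring
      rw [e]
      have habs4 : ∀ A B C D : ℝ, |A+B+C+D| ≤ |A|+|B|+|C|+|D| := by
        intro A B C D
        calc |A+B+C+D| ≤ |A+B+C| + |D| := abs_add_le _ _
          _ ≤ |A+B| + |C| + |D| := by linarith [abs_add_le (A+B) C]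
          _ ≤ |A|+|B|+|C|+|D| := by linarith [abs_add_le A B]
      refine (habs4 _ _ _ _).trans ?_
      have t1 : |2*a₂*(ArtAux.kk θ - ArtAux.kk θ')| ≤ 2*|a₂| *|θ-θ'| := by
        rw [abs_mul, show |2*a₂| = 2*|a₂| from by rw [abs_mul, abs_two]]
        exact mul_le_mul_of_nonneg_left (ArtAux.kk_lipschitz θ θ') (by positivity)
      have t2 : |2*(a₁-a₂)*((ArtAux.kk θ - ArtAux.kk θ')*I)| ≤ 2*|a₁-a₂| *|θ-θ'| := by
        rw [abs_mul, show |2*(a₁-a₂)| = 2*|a₁-a₂| from by rw [abs_mul, abs_two], abs_mul]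
        calc 2*|a₁-a₂| *(|ArtAux.kk θ - ArtAux.kk θ'| *|I|) ≤ 2*|a₁-a₂| *(|θ-θ'| *1) := by
              apply mul_le_mul_of_nonneg_left _ (by positivity)
              exact mul_le_mul (ArtAux.kk_lipschitz θ θ') hI1 (abs_nonneg _) (abs_nonneg _)
          _ = 2*|a₁-a₂| *|θ-θ'| := by ring
      have t3 : |2*(a₁-a₂)*(ArtAux.kk θ'*(I - I'))| ≤ 2*|a₁-a₂| *|I - I'| := by
        rw [abs_mul, show |2*(a₁-a₂)| = 2*|a₁-a₂| from by rw [abs_mul, abs_two], abs_mul]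
        calc 2*|a₁-a₂| *(|ArtAux.kk θ'| *|I - I'|) ≤ 2*|a₁-a₂| *(1*|I - I'|) := by
              apply mul_le_mul_of_nonneg_left _ (by positivity)
              exact mul_le_mul_of_nonneg_right (ArtAux.kk_abs_le θ') (abs_nonneg _)
          _ = 2*|a₁-a₂| *|I - I'| := by ring
      have t4 : |(a₁-a₂)*(ArtAux.mm θ*fX θ - ArtAux.mm θ'*fX θ')|
          ≤ |a₁-a₂| *(2*cX*|θ-θ'| + (1+|θ'|)^2*(LX*|θ-θ'|)) := by
        rw [abs_mul]
        apply mul_le_mul_of_nonneg_left _ (abs_nonneg _)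
        have e2 : ArtAux.mm θ*fX θ - ArtAux.mm θ'*fX θ'
            = (ArtAux.mm θ - ArtAux.mm θ')*fX θ + ArtAux.mm θ'*(fX θ - fX θ') := by
          ring
        rw [e2]
        refine (abs_add_le _ _).trans ?_
        rw [abs_mul, abs_mul]
        have b1 : |ArtAux.mm θ - ArtAux.mm θ'| *|fX θ| ≤ 2*|θ-θ'| *cX :=
          mul_le_mul (ArtAux.mm_lipschitz θ θ')
            (by rw [abs_of_nonneg (hfnonneg θ)]; exact hfbd θ) (abs_nonneg _) (by positivity)
        have b2 : |ArtAux.mm θ'| *|fX θ - fX θ'| ≤ (1+|θ'|)^2*(LX*|θ-θ'|) :=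
          mul_le_mul (by rw [abs_of_nonneg (ArtAux.mm_nonneg θ')]; exact ArtAux.mm_le θ')
            (hfLip θ θ') (abs_nonneg _) (by positivity)
        linarith
      linarith
    have hΔint : Integrable (fun ω => |(if X 0 ω ≤ θ then (1:ℝ) else 0)
        - (if X 0 ω ≤ θ' then 1 else 0)|) μ := by
      refine (integrable_const (2:ℝ)).mono'
        (((hImeas θ).sub (hImeas θ')).abs.aestronglyMeasurable)
        (Eventually.of_forall fun ω => ?_)
      rw [Real.norm_eq_abs, abs_abs]
      have hb : ∀ y : ℝ, ∀ p : Prop, ∀ h : Decidable p, 0 ≤ (if p then (1:ℝ) else 0) ∧ (if p then (1:ℝ) else 0) ≤ 1 := by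
        intro y p h
        split <;> norm_num
      rcases hb 0 (X 0 ω ≤ θ) inferInstance with ⟨h1, h2⟩
      rcases hb 0 (X 0 ω ≤ θ') inferInstance with ⟨h3, h4⟩
      rw [abs_le]
      constructor <;> linarith
    calc ∫ ω, |G θ (X 0 ω) - G θ' (X 0 ω)| ∂μ
        ≤ ∫ ω, ((2*|a₂| *|θ-θ'| + 2*|a₁-a₂| *|θ-θ'|
            + |a₁-a₂| *(2*cX*|θ-θ'| + (1+|θ'|)^2*(LX*|θ-θ'|)))
          + 2*|a₁-a₂| * |(if X 0 ω ≤ θ then (1:ℝ) else 0)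
              - (if X 0 ω ≤ θ' then 1 else 0)|) ∂μ := by
          refine integral_mono_of_nonneg (Eventually.of_forall fun ω => abs_nonneg _)
            ((integrable_const _).add (hΔint.const_mul _)) ?_
          exact Eventually.of_forall fun ω => hpt (X 0 ω)
      _ = (2*|a₂| *|θ-θ'| + 2*|a₁-a₂| *|θ-θ'|
            + |a₁-a₂| *(2*cX*|θ-θ'| + (1+|θ'|)^2*(LX*|θ-θ'|)))
          + 2*|a₁-a₂| * ∫ ω, |(if X 0 ω ≤ θ then (1:ℝ) else 0)
              - (if X 0 ω ≤ θ' then 1 else 0)| ∂μ := by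
          rw [integral_add (integrable_const _) (hΔint.const_mul _),
            integral_const, integral_const_mul]
          simp [measure_univ]
      _ ≤ (2*|a₂| *|θ-θ'| + 2*|a₁-a₂| *|θ-θ'|
            + |a₁-a₂| *(2*cX*|θ-θ'| + (1+|θ'|)^2*(LX*|θ-θ'|)))
          + 2*|a₁-a₂| * (cX * (θ - θ')) := by
          have h5 := hIdiff θ θ' hle
          have h6 : (0:ℝ) ≤ 2*|a₁-a₂| := by positivity
          nlinarith [mul_le_mul_of_nonneg_left h5 h6]
      _ ≤ LG * ((1 + |θ| + |θ'|)^2) * |θ - θ'| := by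
          have harith := arith_LG |a₂| |a₁-a₂| (|a₁|+|a₂|) cX LX |θ-θ'| |θ| |θ'|
            (abs_nonneg _) (abs_nonneg _) (le_add_of_nonneg_left (abs_nonneg a₁)) (abs_sub a₁ a₂)
            (abs_nonneg _) hcX hLX (abs_nonneg _) (abs_nonneg _)
          rw [show cX * (θ - θ') = cX * |θ-θ'| from by rw [habs]]
          simp only [LG]
          nlinarith [harith]
  refine ⟨⟨?_, ?_, ?_, ?_⟩, ⟨?_, ?_⟩, ⟨?_, ?_⟩, ?_⟩
  · rw [contDiff_one_iff_deriv]
    refine ⟨fun θ => (hud θ).differentiableAt, ?_⟩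
    have hde : deriv u = fun θ : ℝ => 2*a₂*ArtAux.kk θ + 2*(a₁-a₂)*ArtAux.kk θ*Φ θ
        + (a₁-a₂)*ArtAux.mm θ*fX θ + 30*θ^29 := funext fun θ => (hud θ).deriv
    rw [hde]
    exact hDcont
  · rw [show (4 * (2 * 14 + 1)) = 116 from by norm_num]
    refine hmom.mono' (hθ₀meas.abs.pow_const 116).aestronglyMeasurable
      (Eventually.of_forall fun ω => ?_)
    rw [Real.norm_eq_abs, abs_of_nonneg (by positivity)]
    have h : (0:ℝ) ≤ |X 0 ω|^116 := by positivity
    linarith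
  · have h1 : (fun ω => |X 0 ω| ^ ((4*(2*(14:ℝ)+1))*1)) = fun ω => |X 0 ω|^(116:ℕ) := by
      funext ω
      rw [show ((4*(2*(14:ℝ)+1))*1) = ((116:ℕ):ℝ) from by norm_num, Real.rpow_natCast]
    rw [h1]
    refine hmom.mono' ((hXmeas 0).abs.pow_const 116).aestronglyMeasurable
      (Eventually.of_forall fun ω => ?_)
    rw [Real.norm_eq_abs, abs_of_nonneg (by positivity)]
    have h : (0:ℝ) ≤ |θ₀ ω|^116 := by positivity
    linarith
  · intro θ
    have h1 : (fun ω => F θ (X 0 ω) + G θ (X 0 ω)) = fun ω => G θ (X 0 ω) + 30*θ^29 := by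
      funext ω
      simp only [F]
      ring
    rw [(hud θ).deriv, h1, integral_add (hGint θ) (integrable_const _), integral_const,
      hGexp θ]
    simp only [measure_univ, ENNReal.toReal_one, probReal_univ, one_smul]
  · intro θ θ'
    have hrp : (1 + |θ| + |θ'|) ^ ((3:ℝ) - 1) = (1 + |θ| + |θ'|)^(2:ℕ) := by
      rw [show (3:ℝ) - 1 = ((2:ℕ):ℝ) from by norm_num, Real.rpow_natCast]
    rw [hrp]
    rcases le_total θ' θ with h | h
    · exact key2a θ θ' h
    · have hgoal := key2a θ' θ h
      have e : ∫ ω, |G θ (X 0 ω) - G θ' (X 0 ω)| ∂μ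
          = ∫ ω, |G θ' (X 0 ω) - G θ (X 0 ω)| ∂μ := by
        congr 1
        funext ω
        exact abs_sub_comm _ _
      rw [e, abs_sub_comm θ θ', show (1:ℝ)+|θ|+|θ'| = 1+|θ'|+|θ| from by ring]
      exact hgoal
  · intro θ x
    rw [Real.rpow_one, show ((3:ℝ)) = ((3:ℕ):ℝ) from by norm_num, Real.rpow_natCast]
    have h1 : |G θ x| ≤ 2*(|a₂| + |a₁-a₂|) + |a₁-a₂| *((1+|θ|)^2*cX) := by
      rw [hGeq θ x]
      refine (abs_add_le _ _).trans ?_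
      set I : ℝ := (if x ≤ θ then (1:ℝ) else 0) with hI
      have hI1 : |I| ≤ 1 := by rw [hI]; split <;> norm_num
      have b1 : |2*(a₂ + (a₁-a₂)*I) * ArtAux.kk θ| ≤ 2*(|a₂| + |a₁-a₂|) := by
        rw [abs_mul]
        have h2 : |a₂ + (a₁-a₂)*I| ≤ |a₂| + |a₁-a₂| := by
          refine (abs_add_le _ _).trans ?_
          rw [abs_mul]
          nlinarith [abs_nonneg (a₁-a₂)]
        calc |2*(a₂ + (a₁-a₂)*I)| * |ArtAux.kk θ| ≤ |2*(a₂ + (a₁-a₂)*I)| * 1 :=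
              mul_le_mul_of_nonneg_left (ArtAux.kk_abs_le θ) (abs_nonneg _)
          _ = 2*|a₂ + (a₁-a₂)*I| := by rw [mul_one, abs_mul, abs_two]
          _ ≤ 2*(|a₂| + |a₁-a₂|) := by linarith
      have b2 : |(a₁-a₂)*ArtAux.mm θ*fX θ| ≤ |a₁-a₂| *((1+|θ|)^2*cX) := by
        rw [abs_mul, abs_mul, mul_assoc]
        apply mul_le_mul_of_nonneg_left _ (abs_nonneg _)
        rw [abs_of_nonneg (ArtAux.mm_nonneg θ), abs_of_nonneg (hfnonneg θ)]
        exact mul_le_mul (ArtAux.mm_le θ) (hfbd θ) (hfnonneg θ) (by positivity)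
      linarith
    have harith := arith_KG |a₂| |a₁-a₂| (|a₁|+|a₂|) cX |x| |θ| (abs_nonneg _) (abs_nonneg _)
      (le_add_of_nonneg_left (abs_nonneg a₁)) (abs_sub a₁ a₂) hcX (abs_nonneg _) (abs_nonneg _)
    simp only [KG]
    nlinarith [harith]
  · intro θ θ' x x'
    simp only [F]
    rw [show ((1:ℝ) - 1) = (0:ℝ) from by norm_num, Real.rpow_zero]
    have h1 := abs_pow_sub_pow' θ θ' 29
    norm_num at h1
    have hB : (0:ℝ) ≤ (1+|θ|+|θ'|)^28 := by positivity
    have h2 : |30*θ^29 - 30*θ'^29| = 30 * |θ^29 - θ'^29| := by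
      rw [show 30*θ^29 - 30*θ'^29 = 30*(θ^29 - θ'^29) from by ring, abs_mul]
      norm_num
    rw [h2, show ((2:ℕ)*14) = 28 from by norm_num]
    obtain ⟨B, hBdef⟩ : ∃ B : ℝ, (1+|θ|+|θ'|)^28 = B := ⟨_, rfl⟩
    rw [hBdef] at h1 hB ⊢
    clear hBdef
    nlinarith [h1, mul_nonneg hB (abs_nonneg (x-x'))]
  · intro θ x
    rw [Real.rpow_one]
    have h1 : |F θ x| = 30*|θ|^29 := by
      simp only [F]
      rw [abs_mul, abs_pow]
      norm_num
    rw [h1, show ((2:ℕ)*14+1) = 29 from by norm_num]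
    nlinarith [pow_nonneg (abs_nonneg θ) 29, abs_nonneg x,
      mul_nonneg (abs_nonneg x) (pow_nonneg (abs_nonneg θ) 29)]
  · intro θ θ' x
    simp only [F, Real.rpow_zero]
    have h1 : |θ|^(2*14) = θ^28 := by
      rw [show ((2:ℕ)*14) = 28 from by norm_num, ← abs_pow,
        abs_of_nonneg (by positivity : (0:ℝ) ≤ θ^28)]
    have h1' : |θ'|^(2*14) = θ'^28 := by
      rw [show ((2:ℕ)*14) = 28 from by norm_num, ← abs_pow,
        abs_of_nonneg (by positivity : (0:ℝ) ≤ θ'^28)]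
    rw [h1, h1']
    have := convex_part θ θ'
    nlinarith [this]

end
end
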